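/- arXiv:0710.1248 — 8 statements merged into one kernel-verified Lean document; each statement's English description precedes it below -/
import Mathlib

section
/- Let (J, cl) be a finite convex geometry and let C ⊆ J be a circuit. Then there exists a unique element x ∈ C with x ∈ cl (C \ {x}) (the root of C). -/
open Set

/-- Orientation sign of a triple of points in the plane: the sign of the determinant of
the matrix with columns `y - x` and `z - x`. -/
noncomputable def osign (x y z : Fin 2 → ℝ) : ℝ :=
  Real.sign ((y 0 - x 0) * (z 1 - x 1) - (y 1 - x 1) * (z 0 - x 0))

/-- A planar point set is in general position if no three distinct points are collinear. -/
def GenPos (X : Set (Fin 2 → ℝ)) : Prop :=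
  ∀ x ∈ X, ∀ y ∈ X, ∀ z ∈ X, x ≠ y → y ≠ z → x ≠ z →
    ¬ Collinear ℝ ({x, y, z} : Set (Fin 2 → ℝ))

/-- A convex geometry on a finite set `J`: a closure operator satisfying the
anti-exchange axiom. -/
structure ConvexGeometry (J : Type) [Fintype J] where
  cl : Set J → Set J
  extensive : ∀ A : Set J, A ⊆ cl A
  mono : ∀ A B : Set J, A ⊆ B → cl A ⊆ cl B
  idem : ∀ A : Set J, cl (cl A) = cl A
  antiExchange : ∀ A : Set J, cl A = A → ∀ x y : J, x ≠ y → x ∉ A → y ∉ A →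
    x ∈ cl (A ∪ {y}) → y ∉ cl (A ∪ {x})

variable {J : Type} [Fintype J]

/-- A set is dependent if some element lies in the closure of the rest. -/
def ConvexGeometry.Dependent (G : ConvexGeometry J) (D : Set J) : Prop :=
  ∃ x ∈ D, x ∈ G.cl (D \ {x})

/-- A circuit is an inclusion-minimal dependent set. -/
def ConvexGeometry.IsCircuit (G : ConvexGeometry J) (C : Set J) : Prop :=
  G.Dependent C ∧ ∀ D ⊆ C, G.Dependent D → D = C

/-- A convex 4-geometry: all circuits have exactly 4 elements. -/
def ConvexGeometry.Is4Geometry (G : ConvexGeometry J) : Prop :=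
  ∀ C : Set J, G.IsCircuit C → C.ncard = 4

/-- `(T, a)` is a rooted triangle of `G` if `T ∪ {a}` is a circuit with root `a`. -/
def ConvexGeometry.RT (G : ConvexGeometry J) (T : Set J) (a : J) : Prop :=
  a ∉ T ∧ G.IsCircuit (insert a T) ∧ a ∈ G.cl T

/-- A realization of a convex geometry in the plane. -/
def IsRealization (G : ConvexGeometry J) (f : J → (Fin 2 → ℝ)) : Prop :=
  Function.Injective f ∧ GenPos (Set.range f) ∧
    ∀ Y : Set J, f '' (G.cl Y) = convexHull ℝ (f '' Y) ∩ Set.range f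

/-- `G.rest n` is the set `Jₙ` remaining after removing the first `n` layers. -/
def ConvexGeometry.rest (G : ConvexGeometry J) : ℕ → Set J
  | 0 => Set.univ
  | n + 1 => {x ∈ G.rest n | x ∈ G.cl (G.rest n \ {x})}

/-- The `n`-th layer: the extreme points of the restricted geometry on `G.rest n`. -/
def ConvexGeometry.layer (G : ConvexGeometry J) (n : ℕ) : Set J :=
  {x ∈ G.rest n | x ∉ G.cl (G.rest n \ {x})}

/-! If `x ≠ y` were both roots of the circuit `C`, the closed set `A = cl (C \ {x, y})` would
contain neither of them, by minimality of `C`, while `x ∈ cl (A ∪ {y})` and `y ∈ cl (A ∪ {x})`;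
this contradicts anti-exchange. -/

namespace ConvexGeometry

variable {G : ConvexGeometry J} {C : Set J}

theorem IsCircuit.not_dependent_of_ssubset (hC : G.IsCircuit C) {D : Set J} (hDC : D ⊂ C) :
    ¬ G.Dependent D :=
  fun hD => hDC.ne (hC.2 D hDC.subset hD)

theorem IsCircuit.notMem_cl_diff_pair (hC : G.IsCircuit C) {z w : J}
    (hz : z ∈ C) (hw : w ∈ C) (hzw : z ≠ w) : z ∉ G.cl (C \ {z, w}) := by
  refine fun hmem => hC.not_dependent_of_ssubset (sdiff_singleton_ssubset.mpr hw)
    ⟨z, ⟨hz, hzw⟩, ?_⟩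
  rwa [sdiff_sdiff, union_comm, ← insert_eq]

theorem mem_cl_cl_diff_pair_union {x y : J} (hx : x ∈ G.cl (C \ {x})) :
    x ∈ G.cl (G.cl (C \ {x, y}) ∪ {y}) := by
  refine G.mono _ _ (fun a ha => ?_) hx
  by_cases hay : a = y
  · exact Or.inr hay
  · exact Or.inl (G.extensive _ ⟨ha.1, fun h => h.elim ha.2 hay⟩)

end ConvexGeometry

/-- Every circuit of a finite convex geometry has a unique root. -/
theorem circuit_unique_root (G : ConvexGeometry J) (C : Set J) (hC : G.IsCircuit C) :
    ∃! x : J, x ∈ C ∧ x ∈ G.cl (C \ {x}) := by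
  obtain ⟨x, hxC, hx⟩ := hC.1
  refine ⟨x, ⟨hxC, hx⟩, fun y ⟨hyC, hy⟩ => ?_⟩
  by_contra hyx
  have hxA : x ∉ G.cl (C \ {x, y}) := hC.notMem_cl_diff_pair hxC hyC (Ne.symm hyx)
  have hyA : y ∉ G.cl (C \ {x, y}) := by
    rw [pair_comm]; exact hC.notMem_cl_diff_pair hyC hxC hyx
  have hyx' : y ∈ G.cl (G.cl (C \ {x, y}) ∪ {x}) := by
    rw [pair_comm]; exact ConvexGeometry.mem_cl_cl_diff_pair_union hy
  exact G.antiExchange _ (G.idem _) x y (Ne.symm hyx) hxA hyA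
    (ConvexGeometry.mem_cl_cl_diff_pair_union hx) hyx'
end

section
/- Let (J, cl) be a finite convex geometry, x ∈ J, and T ⊆ J \ {x} inclusion-minimal with the property x ∈ cl T (i.e., x ∈ cl T and x ∉ cl T' for every proper subset T' ⊊ T). Then C := T ∪ {x} is a circuit of (J, cl), and x is its root. -/
open Set

variable {J : Type} [Fintype J]

/-!
Removing the root `x` from `T ∪ {x}` leaves `T`, so `x` is a root. For minimality it suffices
that `x` is the only root of a dependent `D ⊆ T ∪ {x}`: then `D \ {x} ⊆ T` spans `x`, and
minimality of `T` forces `D \ {x} = T`. If instead some `y ∈ T` were a root of `D`, put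
`S = T \ {y}`. Minimality of `T` gives `x ∉ cl S` and `y ∉ cl S` (otherwise `cl S = cl T ∋ x`),
while `x ∈ cl (S ∪ {y})` and `y ∈ cl (S ∪ {x})`, contradicting anti-exchange.
-/

namespace ConvexGeometry

variable (G : ConvexGeometry J) {A B S T D : Set J} {x y z : J}

theorem cl_subset_cl_of_subset_cl (h : A ⊆ G.cl B) : G.cl A ⊆ G.cl B :=
  (G.mono _ _ h).trans (G.idem B).le

theorem cl_sdiff_singleton_eq_cl (hz : z ∈ G.cl (T \ {z})) : G.cl (T \ {z}) = G.cl T :=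
  (G.mono _ _ sdiff_subset).antisymm <| G.cl_subset_cl_of_subset_cl <|
    (subset_insert_sdiff_singleton z T).trans (insert_subset hz (G.extensive _))

theorem notMem_cl_union_singleton_of_mem_cl_union_singleton (hxy : x ≠ y) (hx : x ∉ G.cl S)
    (hy : y ∉ G.cl S) (h : x ∈ G.cl (S ∪ {y})) : y ∉ G.cl (S ∪ {x}) := fun h' =>
  G.antiExchange (G.cl S) (G.idem S) x y hxy hx hy
    (G.mono _ _ (union_subset_union_left _ (G.extensive S)) h)
    (G.mono _ _ (union_subset_union_left _ (G.extensive S)) h')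

section MinimalSpanning

variable (hmem : x ∈ G.cl T) (hmin : ∀ T' : Set J, T' ⊂ T → x ∉ G.cl T')
include hmem hmin

theorem notMem_cl_sdiff_singleton_of_minimal (hz : z ∈ T) : z ∉ G.cl (T \ {z}) := fun h =>
  hmin _ (sdiff_singleton_ssubset.2 hz) (G.cl_sdiff_singleton_eq_cl h ▸ hmem)

theorem eq_of_root_of_subset_union_singleton_of_minimal (hD : D ⊆ T ∪ {x}) (hyD : y ∈ D)
    (hy : y ∈ G.cl (D \ {y})) : y = x := by
  by_contra hyx
  have hyT : y ∈ T := (hD hyD).resolve_right hyx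
  have hxS : x ∉ G.cl (T \ {y}) := hmin _ (sdiff_singleton_ssubset.2 hyT)
  have hyS : y ∉ G.cl (T \ {y}) := G.notMem_cl_sdiff_singleton_of_minimal hmem hmin hyT
  have hx : x ∈ G.cl (T \ {y} ∪ {y}) := by
    rwa [sdiff_union_of_subset (singleton_subset_iff.2 hyT)]
  refine G.notMem_cl_union_singleton_of_mem_cl_union_singleton (Ne.symm hyx) hxS hyS hx
    (G.mono _ _ ?_ hy)
  rintro w ⟨hwD, hwy⟩
  exact (hD hwD).imp (fun hwT => ⟨hwT, hwy⟩) id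

end MinimalSpanning

end ConvexGeometry

/-- If `T ⊆ J \ {x}` is inclusion-minimal with `x ∈ cl T`, then
`T ∪ {x}` is a circuit with root `x`. -/
theorem minimal_spanning_set_gives_circuit (G : ConvexGeometry J) (x : J) (T : Set J)
    (hxT : x ∉ T) (hmem : x ∈ G.cl T) (hmin : ∀ T' : Set J, T' ⊂ T → x ∉ G.cl T') :
    G.IsCircuit (T ∪ {x}) ∧ x ∈ (T ∪ {x}) ∧ x ∈ G.cl ((T ∪ {x}) \ {x}) := by
  have hsdiff : (T ∪ {x}) \ {x} = T := by rw [union_singleton, insert_sdiff_self_of_notMem hxT]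
  have hroot : x ∈ G.cl ((T ∪ {x}) \ {x}) := by rw [hsdiff]; exact hmem
  have hx : x ∈ T ∪ {x} := Or.inr rfl
  refine ⟨⟨⟨x, hx, hroot⟩, ?_⟩, hx, hroot⟩
  rintro D hD ⟨y, hyD, hy⟩
  obtain rfl := G.eq_of_root_of_subset_union_singleton_of_minimal hmem hmin hD hyD hy
  have hDT : D \ {y} ⊆ T := sdiff_subset_iff.2 (union_comm T {y} ▸ hD)
  obtain hDT | hDT := hDT.eq_or_ssubset
  · rw [← hDT, sdiff_union_of_subset (singleton_subset_iff.2 hyD)]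
  · exact absurd hy (hmin _ hDT)
end

section
/- Let X ⊆ ℝ² be a finite set in general position and let cl be the induced convex geometry S ↦ convexHull ℝ S ∩ X. Then every circuit of (X, cl) has exactly 4 elements, and the map C ↦ (C \ {x(C)}, x(C)), where x(C) is the root of C, is a bijection from the set of circuits of (X, cl) onto the set of rooted triangles of X. -/
/-! By Carathéodory's theorem and general position, a point of `X` lying in the hull of a
subset `D` not containing it lies in the hull of three points of `D`. Hence every dependent set
contains a rooted triangle `(T, x)`, and the circuits are exactly the four-point sets
`insert x T`. The root is unique: if a vertex `y` of `T` were also in the hull of the other three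
points, then `x` and `y` would each lie in the hull of the other together with the remaining two
points `S`, which forces `x` into the segment `convexHull S`, against general position. -/

open Set

variable {J : Type} [Fintype J]

/-- A dependent subset of the convex geometry induced on `X` by convex hulls. -/
def DepOn (X D : Set (Fin 2 → ℝ)) : Prop :=
  ∃ x ∈ D, x ∈ convexHull ℝ (D \ {x}) ∩ X

/-- A circuit of the convex geometry induced on `X`: an inclusion-minimal dependent subset. -/
def CircuitOn (X C : Set (Fin 2 → ℝ)) : Prop :=
  C ⊆ X ∧ DepOn X C ∧ ∀ D ⊆ C, DepOn X D → D = C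

/-- A rooted triangle of `X`: a pair `(T, x)` with `T ⊆ X`, `|T| = 3`, `x ∈ X \ T`,
and `x ∈ convexHull ℝ T`. -/
def RootedTriOn (X : Set (Fin 2 → ℝ)) (p : Set (Fin 2 → ℝ) × (Fin 2 → ℝ)) : Prop :=
  p.1 ⊆ X ∧ p.1.ncard = 3 ∧ p.2 ∈ X ∧ p.2 ∉ p.1 ∧ p.2 ∈ convexHull ℝ p.1

theorem mem_convexHull_of_mem_convexHull_insert_of_mem_convexHull_insert
    {𝕜 E : Type*} [Field 𝕜] [LinearOrder 𝕜] [IsStrictOrderedRing 𝕜] [AddCommGroup E]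
    [Module 𝕜 E] {x y : E} {s : Set E} (hxy : x ≠ y)
    (hx : x ∈ convexHull 𝕜 (insert y s)) (hy : y ∈ convexHull 𝕜 (insert x s)) :
    x ∈ convexHull 𝕜 s := by
  rcases s.eq_empty_or_nonempty with rfl | hs
  · simp [hxy] at hx
  rw [convexHull_insert hs] at hx hy
  simp only [mem_convexJoin, mem_singleton_iff, exists_eq_left] at hx hy
  obtain ⟨z, hz, a, b, ha, hb, hab, rfl⟩ := hx
  obtain ⟨w, hw, c, d, hc, hd, hcd, hy⟩ := hy
  -- Substituting `y = c • x + d • w` into `x = a • y + b • z` gives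
  -- `(1 - a * c) • x = (a * d) • w + b • z`, and `1 - a * c > 0` because `x ≠ y` forces `b > 0`.
  have hb0 : 0 < b := hb.lt_of_ne <| by rintro rfl; simp_all
  have hac : 0 < 1 - a * c := by nlinarith [mul_nonneg ha hc]
  have key : (a * d) • w + b • z = (1 - a * c) • (a • y + b • z) := by
    linear_combination (norm := module) a • hy
  convert (convex_convexHull 𝕜 s) hw hz (a := (1 - a * c)⁻¹ * (a * d))
    (b := (1 - a * c)⁻¹ * b) (by positivity) (by positivity)
    (by field_simp; linear_combination a * hcd + hab) using 1
  rw [mul_smul _ (a * d), mul_smul _ b, ← smul_add, key, inv_smul_smul₀ hac.ne']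

namespace RootedTriOn

variable {X T : Set (Fin 2 → ℝ)} {x : Fin 2 → ℝ}

theorem ncard_insert (h : RootedTriOn X (T, x)) : (insert x T).ncard = 4 := by
  obtain ⟨-, hT3, -, hxT, -⟩ := h
  rw [ncard_insert_of_notMem hxT (finite_of_ncard_ne_zero (by omega)), hT3]

theorem depOn_insert (h : RootedTriOn X (T, x)) : DepOn X (insert x T) := by
  obtain ⟨-, -, hxX, hxT, hx⟩ := h
  exact ⟨x, mem_insert x T, by rw [insert_sdiff_self_of_notMem hxT]; exact ⟨hx, hxX⟩⟩

end RootedTriOn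

namespace GenPos

variable {X D T : Set (Fin 2 → ℝ)} {x y : Fin 2 → ℝ}

theorem exists_subset_ncard_eq_three_mem_convexHull (hgp : GenPos X) (hDX : D ⊆ X)
    (hxX : x ∈ X) (hxD : x ∉ D) (hx : x ∈ convexHull ℝ D) :
    ∃ T ⊆ D, T.ncard = 3 ∧ x ∈ convexHull ℝ T := by
  obtain ⟨t, htD, hti, hxt⟩ : ∃ t : Finset (Fin 2 → ℝ), ↑t ⊆ D ∧
      AffineIndependent ℝ ((↑) : t → Fin 2 → ℝ) ∧ x ∈ convexHull ℝ ↑t := by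
    rw [convexHull_eq_union] at hx
    simpa only [mem_iUnion, exists_prop] using hx
  have hle : t.card ≤ 3 := by
    have h2 := (Submodule.finrank_le (vectorSpan ℝ (range ((↑) : t → Fin 2 → ℝ)))).trans_eq
      (Module.finrank_fin_fun ℝ)
    simpa using hti.card_le_finrank_succ.trans (Nat.succ_le_succ h2)
  refine ⟨t, htD, ?_, hxt⟩
  rw [ncard_coe_finset]
  interval_cases h : t.card
  · simp [Finset.card_eq_zero.mp h] at hxt
  · obtain ⟨a, rfl⟩ := Finset.card_eq_one.mp h
    simp only [Finset.coe_singleton, convexHull_singleton, mem_singleton_iff] at hxt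
    exact absurd (htD (by simp [hxt])) hxD
  · obtain ⟨a, b, hab, rfl⟩ := Finset.card_eq_two.mp h
    simp only [Finset.coe_insert, Finset.coe_singleton, insert_subset_iff,
      singleton_subset_iff] at hxt htD
    have hxa : x ≠ a := fun h => hxD (h ▸ htD.1)
    have hxb : x ≠ b := fun h => hxD (h ▸ htD.2)
    exact absurd (collinear_insert_of_mem_affineSpan_pair (convexHull_subset_affineSpan _ hxt))
      (hgp x hxX a (hDX htD.1) b (hDX htD.2) hxa hab hxb)
  · rfl

theorem exists_rootedTriOn_of_depOn (hgp : GenPos X) (hDX : D ⊆ X) (hD : DepOn X D) :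
    ∃ x ∈ D, ∃ T ⊆ D, RootedTriOn X (T, x) := by
  obtain ⟨x, hxD, hx, hxX⟩ := hD
  obtain ⟨T, hT, hT3, hxT⟩ := hgp.exists_subset_ncard_eq_three_mem_convexHull
    (D := D \ {x}) (sdiff_subset.trans hDX) hxX (fun h => h.2 rfl) hx
  exact ⟨x, hxD, T, hT.trans sdiff_subset,
    ⟨hT.trans (sdiff_subset.trans hDX), hT3, hxX, fun h => (hT h).2 rfl, hxT⟩⟩

theorem circuitOn_insert (hgp : GenPos X) (h : RootedTriOn X (T, x)) :
    CircuitOn X (insert x T) := by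
  have hsub : insert x T ⊆ X := insert_subset h.2.2.1 h.1
  refine ⟨hsub, h.depOn_insert, fun D hD hDep => ?_⟩
  obtain ⟨y, hyD, T', hT'D, hT'⟩ := hgp.exists_rootedTriOn_of_depOn (hD.trans hsub) hDep
  have hfin : (insert x T).Finite := finite_of_ncard_ne_zero (by rw [h.ncard_insert]; omega)
  refine eq_of_subset_of_ncard_le hD ?_ hfin
  rw [h.ncard_insert, ← hT'.ncard_insert]
  exact ncard_le_ncard (insert_subset hyD hT'D) (hfin.subset hD)

theorem exists_rootedTriOn_of_circuitOn (hgp : GenPos X) {C : Set (Fin 2 → ℝ)}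
    (hC : CircuitOn X C) : ∃ x ∈ C, RootedTriOn X (C \ {x}, x) := by
  obtain ⟨hCX, hDep, hmin⟩ := hC
  obtain ⟨x, hxC, T, hTC, hT⟩ := hgp.exists_rootedTriOn_of_depOn hCX hDep
  have hC : insert x T = C := hmin _ (insert_subset hxC hTC) hT.depOn_insert
  refine ⟨x, hxC, ?_⟩
  rwa [← hC, insert_sdiff_self_of_notMem hT.2.2.2.1]

theorem notMem_convexHull_insert_sdiff_of_rootedTriOn (hgp : GenPos X)
    (h : RootedTriOn X (T, x)) (hyT : y ∈ T) : y ∉ convexHull ℝ (insert x T \ {y}) := by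
  obtain ⟨hTX, hT3, hxX, hxT, hx⟩ := h
  intro hy
  have hxy : x ≠ y := fun h => hxT (h ▸ hyT)
  have hxS : x ∈ convexHull ℝ (T \ {y}) := by
    refine mem_convexHull_of_mem_convexHull_insert_of_mem_convexHull_insert hxy ?_ ?_
    · rwa [insert_sdiff_singleton, insert_eq_of_mem hyT]
    · rwa [insert_sdiff_singleton_comm hxy]
  obtain ⟨T', hT', hT'3, -⟩ := hgp.exists_subset_ncard_eq_three_mem_convexHull
    (sdiff_subset.trans hTX) hxX (fun h => hxT h.1) hxS
  have hle := ncard_le_ncard hT' (finite_of_ncard_ne_zero (by omega)).sdiff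
  rw [ncard_sdiff_singleton_of_mem hyT, hT3] at hle
  omega

end GenPos

theorem circuits_biject_rooted_triangles_general (X : Set (Fin 2 → ℝ)) (hgp : GenPos X) :
    (∀ C : Set (Fin 2 → ℝ), CircuitOn X C → C.ncard = 4) ∧
    ∃ Φ : {C : Set (Fin 2 → ℝ) // CircuitOn X C} →
        {p : Set (Fin 2 → ℝ) × (Fin 2 → ℝ) // RootedTriOn X p},
      Function.Bijective Φ ∧
      ∀ C : {C : Set (Fin 2 → ℝ) // CircuitOn X C},
        (Φ C).1.2 ∈ C.1 ∧ (Φ C).1.2 ∈ convexHull ℝ (C.1 \ {(Φ C).1.2}) ∧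
        (Φ C).1.1 = C.1 \ {(Φ C).1.2} := by
  choose! root hroot hrootTri using
    fun C (hC : CircuitOn X C) => hgp.exists_rootedTriOn_of_circuitOn hC
  have hinsert (C) (hC : CircuitOn X C) : insert (root C) (C \ {root C}) = C := by
    rw [insert_sdiff_singleton, insert_eq_of_mem (hroot C hC)]
  refine ⟨fun C hC => ?_, fun C => ⟨_, hrootTri C.1 C.2⟩, ⟨?_, ?_⟩,
    fun C => ⟨hroot C.1 C.2, (hrootTri C.1 C.2).2.2.2.2, rfl⟩⟩
  · rw [← hinsert C hC]
    exact (hrootTri C hC).ncard_insert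
  · rintro ⟨C, hC⟩ ⟨D, hD⟩ h
    simp only [Subtype.mk.injEq, Prod.mk.injEq] at h
    rw [Subtype.mk.injEq, ← hinsert C hC, ← hinsert D hD, h.1, h.2]
  · rintro ⟨⟨T, x⟩, hT⟩
    have hC := hgp.circuitOn_insert hT
    have hrx : root (insert x T) = x := by
      rcases hroot _ hC with h | h
      · exact h
      · exact absurd (hrootTri _ hC).2.2.2.2
          (hgp.notMem_convexHull_insert_sdiff_of_rootedTriOn hT h)
    refine ⟨⟨_, hC⟩, ?_⟩
    simp only [hrx, insert_sdiff_self_of_notMem hT.2.2.2.1]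

/-- In the geometry induced on a finite planar set in general position,
every circuit has exactly 4 elements and `C ↦ (C \ {root C}, root C)` is a bijection
from circuits onto rooted triangles. -/
theorem circuits_biject_rooted_triangles (X : Set (Fin 2 → ℝ)) (hX : X.Finite)
    (hgp : GenPos X) :
    (∀ C : Set (Fin 2 → ℝ), CircuitOn X C → C.ncard = 4) ∧
    ∃ Φ : {C : Set (Fin 2 → ℝ) // CircuitOn X C} →
        {p : Set (Fin 2 → ℝ) × (Fin 2 → ℝ) // RootedTriOn X p},
      Function.Bijective Φ ∧
      ∀ C : {C : Set (Fin 2 → ℝ) // CircuitOn X C},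
        (Φ C).1.2 ∈ C.1 ∧ (Φ C).1.2 ∈ convexHull ℝ (C.1 \ {(Φ C).1.2}) ∧
        (Φ C).1.1 = C.1 \ {(Φ C).1.2} :=
  circuits_biject_rooted_triangles_general X hgp
end

section
/- Let J be a finite set and QRT a family of pairs (T, a) with T ⊆ J, |T| = 3 and a ∈ J \ T. Then the following are equivalent: (i) there exists a convex geometry (J, cl) such that the map (T, a) ↦ T ∪ {a} is a bijection from QRT onto the set of circuits of (J, cl), with a the root of the circuit T ∪ {a} for each (T, a) ∈ QRT; (ii) QRT satisfies Dietrich's axiom. -/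
open Set

set_option linter.unusedSectionVars false

variable {J : Type} [Fintype J]

/-- Dietrich's axiom for a family of quasi rooted triangles. -/
def DietrichAxiom (QRT : Set (Set J × J)) : Prop :=
  ∀ p ∈ QRT, ∀ q ∈ QRT, p.2 ∈ q.1 →
    ∃ T₃ : Set J, (T₃, q.2) ∈ QRT ∧ T₃ ⊆ (p.1 ∪ q.1) \ {p.2, q.2}

/- ### Auxiliary lemmas -/

lemma union_singleton_diff {s : Set J} {a : J} (h : a ∉ s) : (s ∪ {a}) \ {a} = s := by
  ext x; simp only [mem_diff, mem_union, mem_singleton_iff]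
  constructor
  · rintro ⟨hx | rfl, hxa⟩
    · exact hx
    · exact absurd rfl hxa
  · intro hx; exact ⟨Or.inl hx, fun hxa => h (hxa ▸ hx)⟩

/-- In a convex geometry, a circuit has a unique root. -/
lemma circuit_root_unique (G : ConvexGeometry J) {C : Set J} (hC : G.IsCircuit C)
    {x y : J} (hx : x ∈ C) (hy : y ∈ C)
    (hxr : x ∈ G.cl (C \ {x})) (hyr : y ∈ G.cl (C \ {y})) : x = y := by
  by_contra hxy
  set B : Set J := (C \ {x}) \ {y} with hB
  have hindep : ∀ z ∈ C, ¬ G.Dependent (C \ {z}) := by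
    intro z hz hdep
    have heq := hC.2 _ diff_subset hdep
    have : z ∈ C \ {z} := heq.symm ▸ hz
    exact this.2 rfl
  have hBx : (C \ {y}) \ {x} = B := by
    ext w; simp only [hB, mem_diff, mem_singleton_iff]; tauto
  have hxA : x ∉ G.cl B := by
    intro h
    exact hindep y hy ⟨x, ⟨hx, fun h' => hxy (mem_singleton_iff.mp h')⟩, hBx ▸ h⟩
  have hyA : y ∉ G.cl B := by
    intro h
    exact hindep x hx ⟨y, ⟨hy, fun h' => hxy (mem_singleton_iff.mp h').symm⟩, h⟩
  have hclosed : G.cl (G.cl B) = G.cl B := G.idem B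
  have hsub1 : C \ {x} ⊆ G.cl B ∪ {y} := by
    intro z hz
    by_cases hzy : z = y
    · exact Or.inr (by simp [hzy])
    · exact Or.inl (G.extensive B ⟨hz, hzy⟩)
  have hsub2 : C \ {y} ⊆ G.cl B ∪ {x} := by
    intro z hz
    by_cases hzx : z = x
    · exact Or.inr (by simp [hzx])
    · exact Or.inl (G.extensive B (hBx ▸ (⟨hz, hzx⟩ : z ∈ (C \ {y}) \ {x})))
  have hxcl : x ∈ G.cl (G.cl B ∪ {y}) := G.mono _ _ hsub1 hxr
  have hAE := G.antiExchange (G.cl B) hclosed x y hxy hxA hyA hxcl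
  exact hAE (G.mono _ _ hsub2 hyr)

/-- One-step closure operator generated by a family of quasi rooted triangles. -/
def QClo (Q : Set (Set J × J)) (A : Set J) : Set J :=
  A ∪ {a | ∃ T, T ⊆ A ∧ (T, a) ∈ Q}

lemma QClo_ext (Q : Set (Set J × J)) (A : Set J) : A ⊆ QClo Q A := subset_union_left

lemma QClo_mono (Q : Set (Set J × J)) {A B : Set J} (h : A ⊆ B) : QClo Q A ⊆ QClo Q B := by
  rintro x (hx | ⟨T, hT, hTQ⟩)
  · exact Or.inl (h hx)
  · exact Or.inr ⟨T, hT.trans h, hTQ⟩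

/-- Derivation collapse under Dietrich's axiom. -/
lemma QClo_key {Q : Set (Set J × J)} (hd : DietrichAxiom Q) (A : Set J) :
    ∀ n (T : Set J) (b : J), (T, b) ∈ Q → (T \ A).ncard ≤ n → T ⊆ QClo Q A →
      ∃ T', T' ⊆ A ∧ (T', b) ∈ Q := by
  intro n
  induction n with
  | zero =>
    intro T b hTb hcard _
    have : T \ A = ∅ := Set.ncard_eq_zero (Set.toFinite _) |>.mp (Nat.le_zero.mp hcard)
    exact ⟨T, Set.diff_eq_empty.mp this, hTb⟩
  | succ n ih =>
    intro T b hTb hcard hT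
    by_cases hTA : T ⊆ A
    · exact ⟨T, hTA, hTb⟩
    · obtain ⟨a, haT, haA⟩ := not_subset.mp hTA
      obtain ⟨Ta, hTa, hTaQ⟩ : ∃ Ta, Ta ⊆ A ∧ (Ta, a) ∈ Q := by
        rcases hT haT with h | h
        · exact absurd h haA
        · exact h
      obtain ⟨T₃, hT₃Q, hT₃sub⟩ := hd (Ta, a) hTaQ (T, b) hTb haT
      have hsub' : T₃ \ A ⊆ (T \ A) \ {a} := by
        intro z hz
        obtain ⟨hz1, hz2⟩ := hT₃sub hz.1
        have hzT : z ∈ T := by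
          rcases hz1 with h | h
          · exact absurd (hTa h) hz.2
          · exact h
        refine ⟨⟨hzT, hz.2⟩, fun hza => hz2 ?_⟩
        simp only [mem_insert_iff, mem_singleton_iff] at *
        exact Or.inl hza
      have hlt : ((T \ A) \ {a}).ncard < (T \ A).ncard :=
        Set.ncard_diff_singleton_lt_of_mem ⟨haT, haA⟩ (Set.toFinite _)
      have hcard' : (T₃ \ A).ncard ≤ n := by
        have := Set.ncard_le_ncard hsub' (Set.toFinite _)
        omega
      have hT₃cl : T₃ ⊆ QClo Q A := by
        intro z hz
        obtain ⟨hz1, _⟩ := hT₃sub hz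
        rcases hz1 with h | h
        · exact Or.inl (hTa h)
        · exact hT h
      exact ih T₃ b hT₃Q hcard' hT₃cl

/-- A family `QRT` of candidate rooted triangles arises (bijectively,
with prescribed roots) as the circuits of a convex geometry on `J` iff it satisfies
Dietrich's axiom. -/
theorem dietrich_characterization (QRT : Set (Set J × J))
    (hQRT : ∀ p ∈ QRT, p.1.ncard = 3 ∧ p.2 ∉ p.1) :
    (∃ G : ConvexGeometry J,
      (∀ p ∈ QRT, G.IsCircuit (p.1 ∪ {p.2}) ∧ p.2 ∈ G.cl ((p.1 ∪ {p.2}) \ {p.2})) ∧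
      (∀ C : Set J, G.IsCircuit C → ∃ p ∈ QRT, C = p.1 ∪ {p.2}) ∧
      (∀ p ∈ QRT, ∀ q ∈ QRT, p.1 ∪ {p.2} = q.1 ∪ {q.2} → p = q)) ↔
    DietrichAxiom QRT := by
  constructor
  · -- Forward direction: the circuits of a convex geometry satisfy Dietrich's axiom.
    rintro ⟨G, h1, h2, h3⟩ p hp q hq hpq
    obtain ⟨hp3, hpnot⟩ := hQRT p hp
    obtain ⟨hq3, hqnot⟩ := hQRT q hq
    have hab : p.2 ≠ q.2 := fun h => hqnot (h ▸ hpq)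
    have ha : p.2 ∈ G.cl p.1 := by
      have := (h1 p hp).2
      rwa [union_singleton_diff hpnot] at this
    have hb : q.2 ∈ G.cl q.1 := by
      have := (h1 q hq).2
      rwa [union_singleton_diff hqnot] at this
    set X : Set J := (p.1 ∪ q.1) \ {p.2, q.2} with hX
    have hbXmem : q.2 ∉ X := fun h => h.2 (by simp)
    have haXmem : p.2 ∉ X := fun h => h.2 (by simp)
    -- Step 1: q.2 ∈ cl X.
    have hT2X : q.1 ⊆ X ∪ {p.2} := by
      intro z hz
      by_cases hza : z = p.2
      · exact Or.inr (by simp [hza])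
      · refine Or.inl ⟨Or.inr hz, ?_⟩
        simp only [mem_insert_iff, mem_singleton_iff]
        push_neg
        exact ⟨hza, fun h => hqnot (h ▸ hz)⟩
    have hT1X : p.1 ⊆ X ∪ {q.2} := by
      intro z hz
      by_cases hzb : z = q.2
      · exact Or.inr (by simp [hzb])
      · refine Or.inl ⟨Or.inl hz, ?_⟩
        simp only [mem_insert_iff, mem_singleton_iff]
        push_neg
        exact ⟨fun h => hpnot (h ▸ hz), hzb⟩
    have hbX : q.2 ∈ G.cl X := by
      by_contra hbA
      have hclosed : G.cl (G.cl X) = G.cl X := G.idem X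
      have hbclA : q.2 ∈ G.cl (G.cl X ∪ {p.2}) := by
        refine G.mono _ _ ?_ hb
        exact hT2X.trans (union_subset_union_left _ (G.extensive X))
      have haA : p.2 ∉ G.cl X := by
        intro haA
        have h1' : G.cl X ∪ {p.2} ⊆ G.cl X := union_subset Subset.rfl (by simpa)
        have := (G.mono _ _ h1').trans (le_of_eq hclosed) hbclA
        exact hbA this
      have haclb : p.2 ∈ G.cl (G.cl X ∪ {q.2}) := by
        refine G.mono _ _ ?_ ha
        exact hT1X.trans (union_subset_union_left _ (G.extensive X))
      have hAE := G.antiExchange (G.cl X) hclosed p.2 q.2 hab haA hbA haclb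
      exact hAE hbclA
    -- Step 2: find a minimal subset D of X whose closure contains q.2.
    set s : Set ℕ := {n | ∃ D, D ⊆ X ∧ q.2 ∈ G.cl D ∧ D.ncard = n} with hs
    have hsne : s.Nonempty := ⟨X.ncard, X, Subset.rfl, hbX, rfl⟩
    obtain ⟨D, hDX, hbD, hDn⟩ := Nat.sInf_mem hsne
    have hmin : ∀ D', D' ⊆ X → q.2 ∈ G.cl D' → D.ncard ≤ D'.ncard := by
      intro D' h1' h2'
      rw [hDn]
      exact Nat.sInf_le ⟨D', h1', h2', rfl⟩
    have hbnD : q.2 ∉ D := fun h => hbXmem (hDX h)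
    -- Step 3: D ∪ {q.2} is a circuit with root q.2.
    have hdep : G.Dependent (D ∪ {q.2}) :=
      ⟨q.2, Or.inr rfl, by rw [union_singleton_diff hbnD]; exact hbD⟩
    have hcirc : G.IsCircuit (D ∪ {q.2}) := by
      refine ⟨hdep, ?_⟩
      intro E hE hEdep
      obtain ⟨x, hxE, hxcl⟩ := hEdep
      by_cases hxb : x = q.2
      · rw [hxb] at hxE hxcl
        have hsubD : E \ {q.2} ⊆ D := by
          intro z hz
          rcases hE hz.1 with h | h
          · exact h
          · exact absurd h hz.2
        have hle := hmin _ (hsubD.trans hDX) hxcl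
        have heq : E \ {q.2} = D := Set.eq_of_subset_of_ncard_le hsubD hle (Set.toFinite _)
        refine Subset.antisymm hE ?_
        rw [← heq]
        exact union_subset diff_subset (singleton_subset_iff.mpr hxE)
      · have hxD : x ∈ D := by
          rcases hE hxE with h | h
          · exact h
          · exact absurd h hxb
        have hbA' : q.2 ∉ G.cl (D \ {x}) := by
          intro h
          have := hmin _ (diff_subset.trans hDX) h
          have hlt := Set.ncard_diff_singleton_lt_of_mem hxD (Set.toFinite _)
          omega
        have hxA' : x ∉ G.cl (D \ {x}) := by
          intro h
          have hDsub : D ⊆ G.cl (D \ {x}) := by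
            intro z hz
            by_cases hzx : z = x
            · exact hzx ▸ h
            · exact G.extensive _ ⟨hz, hzx⟩
          have : G.cl D ⊆ G.cl (D \ {x}) := by
            have := G.mono _ _ hDsub
            rwa [G.idem] at this
          exact hbA' (this hbD)
        have hclosed' : G.cl (G.cl (D \ {x})) = G.cl (D \ {x}) := G.idem _
        have hbAx : q.2 ∈ G.cl (G.cl (D \ {x}) ∪ {x}) := by
          refine G.mono D _ ?_ hbD
          intro z hz
          by_cases hzx : z = x
          · exact Or.inr (by simp [hzx])
          · exact Or.inl (G.extensive _ ⟨hz, hzx⟩)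
        have hAE := G.antiExchange _ hclosed' q.2 x (fun h => hxb h.symm) hbA' hxA' hbAx
        exfalso
        refine hAE (G.mono _ _ ?_ hxcl)
        intro z hz
        rcases hE hz.1 with h | h
        · exact Or.inl (G.extensive _ ⟨h, hz.2⟩)
        · exact Or.inr h
    -- Step 4: identify the circuit with a member of QRT.
    obtain ⟨r, hrQ, hCeq⟩ := h2 _ hcirc
    obtain ⟨hr3, hrnot⟩ := hQRT r hrQ
    have hrroot : r.2 ∈ G.cl ((D ∪ {q.2}) \ {r.2}) := by
      have := (h1 r hrQ).2
      rwa [← hCeq] at this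
    have hbroot : q.2 ∈ G.cl ((D ∪ {q.2}) \ {q.2}) := by
      rw [union_singleton_diff hbnD]; exact hbD
    have hrmem : r.2 ∈ D ∪ {q.2} := hCeq ▸ Or.inr rfl
    have hbmem : q.2 ∈ D ∪ {q.2} := Or.inr rfl
    have hr2b : r.2 = q.2 := circuit_root_unique G hcirc hrmem hbmem hrroot hbroot
    have hr1D : r.1 = D := by
      have h1' : r.1 = (r.1 ∪ {r.2}) \ {r.2} := (union_singleton_diff hrnot).symm
      rw [h1', ← hCeq, hr2b, union_singleton_diff hbnD]
    refine ⟨r.1, ?_, hr1D ▸ hDX⟩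
    have : (r.1, q.2) = r := Prod.ext rfl hr2b.symm
    rw [this]
    exact hrQ
  · -- Reverse direction: construct the convex geometry from QRT.
    intro hd
    have hidem : ∀ A : Set J, QClo QRT (QClo QRT A) = QClo QRT A := by
      intro A
      refine Subset.antisymm ?_ (QClo_ext _ _)
      rintro x (hx | ⟨T, hT, hTQ⟩)
      · exact hx
      · obtain ⟨T', hT'A, hT'Q⟩ := QClo_key hd A (T \ A).ncard T x hTQ le_rfl hT
        exact Or.inr ⟨T', hT'A, hT'Q⟩
    set G : ConvexGeometry J :=
      { cl := QClo QRT
        extensive := QClo_ext QRT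
        mono := fun A B h => QClo_mono QRT h
        idem := hidem
        antiExchange := by
          intro A hA x y hxy hxA hyA hxcl hycl
          obtain ⟨T, hT, hTQ⟩ : ∃ T, T ⊆ A ∪ {y} ∧ (T, x) ∈ QRT := by
            rcases hxcl with h | h
            · rcases h with h | h
              · exact absurd h hxA
              · exact absurd (mem_singleton_iff.mp h) hxy
            · exact h
          obtain ⟨S, hS, hSQ⟩ : ∃ S, S ⊆ A ∪ {x} ∧ (S, y) ∈ QRT := by
            rcases hycl with h | h
            · rcases h with h | h
              · exact absurd h hyA
              · exact absurd (mem_singleton_iff.mp h) hxy.symm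
            · exact h
          have hxS : x ∈ S := by
            by_contra hxS
            have hSA : S ⊆ A := by
              intro z hz
              rcases hS hz with h | h
              · exact h
              · exact absurd (mem_singleton_iff.mp h) (fun h' => hxS (h' ▸ hz))
            have : y ∈ QClo QRT A := Or.inr ⟨S, hSA, hSQ⟩
            rw [hA] at this
            exact hyA this
          obtain ⟨T₃, hT₃Q, hT₃sub⟩ := hd (T, x) hTQ (S, y) hSQ hxS
          have hT₃A : T₃ ⊆ A := by
            intro z hz
            obtain ⟨hz1, hz2⟩ := hT₃sub hz
            simp only [mem_insert_iff, mem_singleton_iff] at hz2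
            push_neg at hz2
            rcases hz1 with h | h
            · rcases hT h with h' | h'
              · exact h'
              · exact absurd (mem_singleton_iff.mp h') hz2.2
            · rcases hS h with h' | h'
              · exact h'
              · exact absurd (mem_singleton_iff.mp h') hz2.1
          have : y ∈ QClo QRT A := Or.inr ⟨T₃, hT₃A, hT₃Q⟩
          rw [hA] at this
          exact hyA this } with hG
    -- auxiliary: a dependent set contains some S ∪ {x} with (S, x) ∈ QRT
    have hdepstruct : ∀ D : Set J, G.Dependent D →
        ∃ S x, (S, x) ∈ QRT ∧ S ∪ {x} ⊆ D ∧ x ∉ S := by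
      intro D ⟨x, hxD, hxcl⟩
      obtain ⟨S, hS, hSQ⟩ : ∃ S, S ⊆ D \ {x} ∧ (S, x) ∈ QRT := by
        rcases hxcl with h | h
        · exact absurd h (by simp)
        · exact h
      refine ⟨S, x, hSQ, ?_, (hQRT (S, x) hSQ).2⟩
      exact union_subset (hS.trans diff_subset) (by simpa using hxD)
    have hQRTcirc : ∀ p ∈ QRT, G.IsCircuit (p.1 ∪ {p.2}) ∧
        p.2 ∈ G.cl ((p.1 ∪ {p.2}) \ {p.2}) := by
      intro p hp
      obtain ⟨hp3, hpnot⟩ := hQRT p hp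
      have hroot : p.2 ∈ G.cl ((p.1 ∪ {p.2}) \ {p.2}) := by
        rw [union_singleton_diff hpnot]
        exact Or.inr ⟨p.1, Subset.rfl, by simpa using hp⟩
      have hC4 : (p.1 ∪ {p.2}).ncard = 4 := by
        rw [Set.union_singleton, Set.ncard_insert_of_notMem hpnot (Set.toFinite _), hp3]
      refine ⟨⟨⟨p.2, Or.inr rfl, hroot⟩, ?_⟩, hroot⟩
      intro E hE hEdep
      obtain ⟨S, x, hSQ, hSsub, hxS⟩ := hdepstruct E hEdep
      have hS4 : (S ∪ {x}).ncard = 4 := by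
        rw [Set.union_singleton, Set.ncard_insert_of_notMem hxS (Set.toFinite _),
          (hQRT (S, x) hSQ).1]
      have h4le : 4 ≤ E.ncard := hS4 ▸ Set.ncard_le_ncard hSsub (Set.toFinite _)
      exact Set.eq_of_subset_of_ncard_le hE (hC4 ▸ h4le) (Set.toFinite _)
    refine ⟨G, hQRTcirc, ?_, ?_⟩
    · intro C hC
      obtain ⟨S, x, hSQ, hSsub, hxS⟩ := hdepstruct C hC.1
      have hdepS : G.Dependent (S ∪ {x}) := by
        refine ⟨x, Or.inr rfl, ?_⟩
        rw [union_singleton_diff hxS]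
        exact Or.inr ⟨S, Subset.rfl, hSQ⟩
      exact ⟨(S, x), hSQ, (hC.2 _ hSsub hdepS).symm⟩
    · intro p hp q hq hpq
      obtain ⟨hp3, hpnot⟩ := hQRT p hp
      obtain ⟨hq3, hqnot⟩ := hQRT q hq
      by_cases h22 : p.2 = q.2
      · have h11 : p.1 = q.1 := by
          rw [← union_singleton_diff hpnot, hpq, h22, union_singleton_diff hqnot]
        exact Prod.ext h11 h22
      · exfalso
        have hp2q1 : p.2 ∈ q.1 := by
          have : p.2 ∈ q.1 ∪ {q.2} := hpq ▸ Or.inr rfl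
          rcases this with h | h
          · exact h
          · exact absurd (mem_singleton_iff.mp h) h22
        obtain ⟨T₃, hT₃Q, hT₃sub⟩ := hd p hp q hq hp2q1
        have hT₃3 : T₃.ncard = 3 := (hQRT (T₃, q.2) hT₃Q).1
        have hq2p1 : q.2 ∈ p.1 := by
          have : q.2 ∈ p.1 ∪ {p.2} := hpq.symm ▸ Or.inr rfl
          rcases this with h | h
          · exact h
          · exact absurd (mem_singleton_iff.mp h).symm h22
        have hsub' : T₃ ⊆ p.1 \ {q.2} := by
          intro z hz
          obtain ⟨hz1, hz2⟩ := hT₃sub hz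
          simp only [mem_insert_iff, mem_singleton_iff] at hz2
          push_neg at hz2
          have hzC : z ∈ p.1 ∪ {p.2} := by
            rcases hz1 with h | h
            · exact Or.inl h
            · exact hpq ▸ Or.inl h
          have hzp1 : z ∈ p.1 := by
            rcases hzC with h | h
            · exact h
            · exact absurd (mem_singleton_iff.mp h) hz2.1
          exact ⟨hzp1, by simpa using hz2.2⟩
        have hlt := Set.ncard_diff_singleton_lt_of_mem hq2p1 (Set.toFinite _)
        have hle := Set.ncard_le_ncard hsub' (Set.toFinite _)
        omega
end

section
/- Let X, Y ⊆ ℝ² be finite sets in general position and F : X → Y a bijection such that either sign(F x₁, F x₂, F x₃) = sign(x₁, x₂, x₃) for all distinct x₁, x₂, x₃ ∈ X, or sign(F x₁, F x₂, F x₃) = −sign(x₁, x₂, x₃) for all distinct x₁, x₂, x₃ ∈ X. Then F is an isomorphism of the induced convex geometries: for every S ⊆ X, F '' (convexHull ℝ S ∩ X) = convexHull ℝ (F '' S) ∩ Y. -/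
open Set

variable {J : Type} [Fintype J]

/-!
A point `p ∈ X \ S` lies in `convexHull ℝ S` iff, by Carathéodory's theorem, it lies in a
triangle `abc` with vertices in `S` (segments are ruled out by general position). Since the
barycentric coordinates of `p` with respect to `abc` are the ratios of the orientation
determinants of `bcp`, `cap`, `abp` to that of `abc`, the point `p` lies in the triangle iff
these three triples are oriented like `abc`. A bijection multiplying all orientations by the same
sign `±1` preserves this criterion, and so does its inverse.
-/

noncomputable def orientDet (x y z : Fin 2 → ℝ) : ℝ :=
  (y 0 - x 0) * (z 1 - x 1) - (y 1 - x 1) * (z 0 - x 0)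

theorem osign_eq_sign_orientDet (x y z : Fin 2 → ℝ) :
    osign x y z = Real.sign (orientDet x y z) := rfl

theorem collinear_of_orientDet_eq_zero {x y z : Fin 2 → ℝ} (h : orientDet x y z = 0) :
    Collinear ℝ ({x, y, z} : Set (Fin 2 → ℝ)) := by
  by_cases hxy : x = y
  · subst hxy
    simpa using collinear_pair ℝ x z
  rw [collinear_iff_of_mem (mem_insert x _)]
  refine ⟨y - x, ?_⟩
  simp only [mem_insert_iff, mem_singleton_iff, forall_eq_or_imp, forall_eq]
  refine ⟨⟨0, by simp⟩, ⟨1, by simp⟩, ?_⟩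
  obtain ⟨i, hi⟩ : ∃ i, y i - x i ≠ 0 := by
    by_contra! h
    exact hxy (funext fun i => by linarith [h i])
  refine ⟨(z i - x i) / (y i - x i), funext fun j => ?_⟩
  simp only [orientDet] at h
  fin_cases i <;> fin_cases j <;> simp at hi ⊢ <;> field_simp <;> linarith

theorem GenPos.orientDet_ne_zero {X : Set (Fin 2 → ℝ)} (hX : GenPos X) {x y z : Fin 2 → ℝ}
    (hx : x ∈ X) (hy : y ∈ X) (hz : z ∈ X) (hxy : x ≠ y) (hyz : y ≠ z) (hxz : x ≠ z) :
    orientDet x y z ≠ 0 :=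
  fun h => hX x hx y hy z hz hxy hyz hxz (collinear_of_orientDet_eq_zero h)

theorem orientDet_add_orientDet_add_orientDet (a b c p : Fin 2 → ℝ) :
    orientDet b c p + orientDet c a p + orientDet a b p = orientDet a b c := by
  simp only [orientDet]; ring

theorem orientDet_combination {a b c : Fin 2 → ℝ} {α β γ : ℝ} (h : α + β + γ = 1) :
    orientDet b c (α • a + β • b + γ • c) = α * orientDet a b c ∧
      orientDet c a (α • a + β • b + γ • c) = β * orientDet a b c ∧
      orientDet a b (α • a + β • b + γ • c) = γ * orientDet a b c := by
  obtain rfl : γ = 1 - α - β := by linarith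
  refine ⟨?_, ?_, ?_⟩ <;>
    simp only [orientDet, Pi.add_apply, Pi.smul_apply, smul_eq_mul] <;> ring

theorem eq_orientDet_combination {a b c : Fin 2 → ℝ} (hD : orientDet a b c ≠ 0)
    (p : Fin 2 → ℝ) :
    (orientDet b c p / orientDet a b c) • a + (orientDet c a p / orientDet a b c) • b +
      (orientDet a b p / orientDet a b c) • c = p := by
  simp only [orientDet] at hD ⊢
  funext i
  fin_cases i <;> simp <;> field_simp <;> ring

theorem mem_convexHull_triple_iff {E : Type*} [AddCommGroup E] [Module ℝ E] {a b c p : E} :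
    p ∈ convexHull ℝ {a, b, c} ↔ ∃ α β γ : ℝ, 0 ≤ α ∧ 0 ≤ β ∧ 0 ≤ γ ∧ α + β + γ = 1 ∧
      α • a + β • b + γ • c = p := by
  constructor
  · rw [convexHull_insert (insert_nonempty b {c}), convexHull_pair, mem_convexJoin]
    rintro ⟨_, rfl, _, ⟨u, v, hu, hv, huv, rfl⟩, s, t, hs, ht, hst, rfl⟩
    refine ⟨s, t * u, t * v, hs, by positivity, by positivity, ?_, ?_⟩
    · rw [add_assoc, ← mul_add, huv, mul_one, hst]
    · simp only [smul_add, mul_smul, add_assoc]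
  · rintro ⟨α, β, γ, hα, hβ, hγ, hsum, rfl⟩
    refine mem_convexHull_of_exists_fintype ![α, β, γ] ![a, b, c] ?_ ?_ ?_ ?_
    · intro i; fin_cases i <;> simpa
    · simpa [Fin.sum_univ_three] using hsum
    · intro i; fin_cases i <;> simp
    · simp [Fin.sum_univ_three, add_assoc]

theorem mem_convexHull_triple_iff_orientDet {a b c p : Fin 2 → ℝ} (hD : orientDet a b c ≠ 0) :
    p ∈ convexHull ℝ {a, b, c} ↔ 0 ≤ orientDet b c p / orientDet a b c ∧
      0 ≤ orientDet c a p / orientDet a b c ∧ 0 ≤ orientDet a b p / orientDet a b c := by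
  rw [mem_convexHull_triple_iff]
  constructor
  · rintro ⟨α, β, γ, hα, hβ, hγ, hsum, rfl⟩
    obtain ⟨h₁, h₂, h₃⟩ := orientDet_combination (a := a) (b := b) (c := c) hsum
    simpa [h₁, h₂, h₃, hD] using ⟨hα, hβ, hγ⟩
  · rintro ⟨h₁, h₂, h₃⟩
    refine ⟨_, _, _, h₁, h₂, h₃, ?_, eq_orientDet_combination hD p⟩
    rw [← add_div, ← add_div, orientDet_add_orientDet_add_orientDet, div_self hD]

theorem Real.div_nonneg_iff_sign_eq {s t : ℝ} (hs : s ≠ 0) (ht : t ≠ 0) :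
    0 ≤ s / t ↔ Real.sign s = Real.sign t := by
  rcases hs.lt_or_gt with hs | hs <;> rcases ht.lt_or_gt with ht | ht <;>
    norm_num [Real.sign_of_neg, Real.sign_of_pos, hs, ht, div_nonneg_iff, hs.le, ht.le,
      not_le.2 hs, not_le.2 ht]

namespace GenPos

variable {X : Set (Fin 2 → ℝ)}

theorem mem_convexHull_triple_iff_osign (hX : GenPos X) {a b c p : Fin 2 → ℝ}
    (ha : a ∈ X) (hb : b ∈ X) (hc : c ∈ X) (hp : p ∈ X)
    (hab : a ≠ b) (hbc : b ≠ c) (hac : a ≠ c) (hpa : p ≠ a) (hpb : p ≠ b) (hpc : p ≠ c) :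
    p ∈ convexHull ℝ {a, b, c} ↔ osign b c p = osign a b c ∧ osign c a p = osign a b c ∧
      osign a b p = osign a b c := by
  have hD := hX.orientDet_ne_zero ha hb hc hab hbc hac
  simp only [osign_eq_sign_orientDet]
  rw [mem_convexHull_triple_iff_orientDet hD,
    Real.div_nonneg_iff_sign_eq (hX.orientDet_ne_zero hb hc hp hbc hpc.symm hpb.symm) hD,
    Real.div_nonneg_iff_sign_eq (hX.orientDet_ne_zero hc ha hp hac.symm hpa.symm hpc.symm) hD,
    Real.div_nonneg_iff_sign_eq (hX.orientDet_ne_zero ha hb hp hab hpb.symm hpa.symm) hD]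

theorem exists_triangle_of_mem_convexHull (hX : GenPos X) {S : Set (Fin 2 → ℝ)} (hS : S ⊆ X)
    {p : Fin 2 → ℝ} (hpX : p ∈ X) (hp : p ∈ convexHull ℝ S) (hpS : p ∉ S) :
    ∃ a ∈ S, ∃ b ∈ S, ∃ c ∈ S, a ≠ b ∧ b ≠ c ∧ a ≠ c ∧ p ∈ convexHull ℝ {a, b, c} := by
  classical
  rw [convexHull_eq_union] at hp
  simp only [mem_iUnion, exists_prop] at hp
  obtain ⟨t, htS, hti, hpt⟩ := hp
  have hcard : t.card ≤ 3 := by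
    have h := hti.card_le_finrank_succ
    have := Submodule.finrank_le (vectorSpan ℝ (range ((↑) : t → Fin 2 → ℝ)))
    rw [Fintype.card_coe] at h
    rw [Module.finrank_fin_fun] at this
    omega
  interval_cases h : t.card
  · simp_all
  · obtain ⟨a, rfl⟩ := Finset.card_eq_one.1 h
    simp only [Finset.coe_singleton, convexHull_singleton, mem_singleton_iff] at hpt
    exact absurd (htS (by simp [hpt])) hpS
  · obtain ⟨a, b, hab, rfl⟩ := Finset.card_eq_two.1 h
    simp only [Finset.coe_insert, Finset.coe_singleton, insert_subset_iff,
      singleton_subset_iff, convexHull_pair, mem_segment_iff_wbtw] at htS hpt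
    exact absurd hpt.collinear (hX a (hS htS.1) p hpX b (hS htS.2)
      (fun h => hpS (h ▸ htS.1)) (fun h => hpS (h ▸ htS.2)) hab)
  · obtain ⟨a, b, c, hab, hac, hbc, rfl⟩ := Finset.card_eq_three.1 h
    simp only [Finset.coe_insert, Finset.coe_singleton, insert_subset_iff,
      singleton_subset_iff] at htS hpt
    exact ⟨a, htS.1, b, htS.2.1, c, htS.2.2, hab, hbc, hac, hpt⟩

end GenPos

def ScalesOrientation (F : (Fin 2 → ℝ) → (Fin 2 → ℝ)) (X : Set (Fin 2 → ℝ)) (ε : ℝ) : Prop :=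
  ∀ x₁ ∈ X, ∀ x₂ ∈ X, ∀ x₃ ∈ X, x₁ ≠ x₂ → x₂ ≠ x₃ → x₁ ≠ x₃ →
    osign (F x₁) (F x₂) (F x₃) = ε * osign x₁ x₂ x₃

theorem ScalesOrientation.image_convexHull_inter_subset {F : (Fin 2 → ℝ) → (Fin 2 → ℝ)}
    {X Y : Set (Fin 2 → ℝ)} {ε : ℝ} (hs : ScalesOrientation F X ε) (hX : GenPos X)
    (hY : GenPos Y) (hmaps : MapsTo F X Y) (hinj : InjOn F X) {S : Set (Fin 2 → ℝ)}
    (hS : S ⊆ X) : F '' (convexHull ℝ S ∩ X) ⊆ convexHull ℝ (F '' S) ∩ Y := by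
  rintro _ ⟨p, ⟨hp, hpX⟩, rfl⟩
  refine ⟨?_, hmaps hpX⟩
  by_cases hpS : p ∈ S
  · exact subset_convexHull ℝ _ (mem_image_of_mem F hpS)
  obtain ⟨a, haS, b, hbS, c, hcS, hab, hbc, hac, hpabc⟩ :=
    hX.exists_triangle_of_mem_convexHull hS hpX hp hpS
  have ha := hS haS; have hb := hS hbS; have hc := hS hcS
  have hpa : p ≠ a := ne_of_mem_of_not_mem haS hpS |>.symm
  have hpb : p ≠ b := ne_of_mem_of_not_mem hbS hpS |>.symm
  have hpc : p ≠ c := ne_of_mem_of_not_mem hcS hpS |>.symm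
  rw [hX.mem_convexHull_triple_iff_osign ha hb hc hpX hab hbc hac hpa hpb hpc] at hpabc
  have hFp : F p ∈ convexHull ℝ {F a, F b, F c} := by
    rw [hY.mem_convexHull_triple_iff_osign (hmaps ha) (hmaps hb) (hmaps hc) (hmaps hpX)
      (hinj.ne ha hb hab) (hinj.ne hb hc hbc) (hinj.ne ha hc hac) (hinj.ne hpX ha hpa)
      (hinj.ne hpX hb hpb) (hinj.ne hpX hc hpc),
      hs b hb c hc p hpX hbc hpc.symm hpb.symm, hs c hc a ha p hpX hac.symm hpa.symm hpc.symm,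
      hs a ha b hb p hpX hab hpb.symm hpa.symm, hs a ha b hb c hc hab hbc hac, hpabc.1,
      hpabc.2.1, hpabc.2.2]
    exact ⟨rfl, rfl, rfl⟩
  refine convexHull_mono ?_ hFp
  simp only [insert_subset_iff, singleton_subset_iff]
  exact ⟨mem_image_of_mem F haS, mem_image_of_mem F hbS, mem_image_of_mem F hcS⟩

theorem ScalesOrientation.of_invOn {F G : (Fin 2 → ℝ) → (Fin 2 → ℝ)} {X Y : Set (Fin 2 → ℝ)}
    {ε : ℝ} (hs : ScalesOrientation F X ε) (hε : ε * ε = 1) (hinv : InvOn G F X Y)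
    (hG : MapsTo G Y X) : ScalesOrientation G Y ε := by
  intro y₁ h₁ y₂ h₂ y₃ h₃ h₁₂ h₂₃ h₁₃
  have hinj : InjOn G Y := hinv.2.injOn
  have := hs _ (hG h₁) _ (hG h₂) _ (hG h₃) (hinj.ne h₁ h₂ h₁₂) (hinj.ne h₂ h₃ h₂₃)
    (hinj.ne h₁ h₃ h₁₃)
  rw [hinv.2 h₁, hinv.2 h₂, hinv.2 h₃] at this
  rw [this, ← mul_assoc, hε, one_mul]

theorem weakly_equivalent_implies_isomorphic_general (X Y : Set (Fin 2 → ℝ))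
    (hX : GenPos X) (hY : GenPos Y)
    (F : (Fin 2 → ℝ) → (Fin 2 → ℝ)) (hF : Set.BijOn F X Y)
    (hsign :
      (∀ x₁ ∈ X, ∀ x₂ ∈ X, ∀ x₃ ∈ X, x₁ ≠ x₂ → x₂ ≠ x₃ → x₁ ≠ x₃ →
        osign (F x₁) (F x₂) (F x₃) = osign x₁ x₂ x₃) ∨
      (∀ x₁ ∈ X, ∀ x₂ ∈ X, ∀ x₃ ∈ X, x₁ ≠ x₂ → x₂ ≠ x₃ → x₁ ≠ x₃ →
        osign (F x₁) (F x₂) (F x₃) = - osign x₁ x₂ x₃)) :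
    ∀ S : Set (Fin 2 → ℝ), S ⊆ X →
      F '' (convexHull ℝ S ∩ X) = convexHull ℝ (F '' S) ∩ Y := by
  obtain ⟨ε, hε, hs⟩ : ∃ ε : ℝ, ε * ε = 1 ∧ ScalesOrientation F X ε := by
    rcases hsign with h | h
    · exact ⟨1, one_mul 1, by simpa [ScalesOrientation] using h⟩
    · exact ⟨-1, by norm_num, by simpa [ScalesOrientation] using h⟩
  intro S hS
  set G := Function.invFunOn F X
  have hinv : InvOn G F X Y := hF.invOn_invFunOn
  have hG : BijOn G Y X := hF.symm hinv.symm
  have hback := (hs.of_invOn hε hinv hG.mapsTo).image_convexHull_inter_subset hY hX hG.mapsTo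
    hG.injOn (hF.mapsTo.mono_left hS).image_subset
  rw [hinv.1.image_image' hS] at hback
  refine (hs.image_convexHull_inter_subset hX hY hF.mapsTo hF.injOn hS).antisymm ?_
  calc convexHull ℝ (F '' S) ∩ Y
      = F '' (G '' (convexHull ℝ (F '' S) ∩ Y)) :=
        (hinv.2.image_image' inter_subset_right).symm
    _ ⊆ F '' (convexHull ℝ S ∩ X) := image_mono hback

/-- A bijection between finite planar sets in general position that
preserves, or reverses, the orientation of all triples is an isomorphism of the induced
convex geometries. -/
theorem weakly_equivalent_implies_isomorphic (X Y : Set (Fin 2 → ℝ))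
    (hXfin : X.Finite) (hYfin : Y.Finite) (hX : GenPos X) (hY : GenPos Y)
    (F : (Fin 2 → ℝ) → (Fin 2 → ℝ)) (hF : Set.BijOn F X Y)
    (hsign :
      (∀ x₁ ∈ X, ∀ x₂ ∈ X, ∀ x₃ ∈ X, x₁ ≠ x₂ → x₂ ≠ x₃ → x₁ ≠ x₃ →
        osign (F x₁) (F x₂) (F x₃) = osign x₁ x₂ x₃) ∨
      (∀ x₁ ∈ X, ∀ x₂ ∈ X, ∀ x₃ ∈ X, x₁ ≠ x₂ → x₂ ≠ x₃ → x₁ ≠ x₃ →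
        osign (F x₁) (F x₂) (F x₃) = - osign x₁ x₂ x₃)) :
    ∀ S : Set (Fin 2 → ℝ), S ⊆ X →
      F '' (convexHull ℝ S ∩ X) = convexHull ℝ (F '' S) ∩ Y :=
  weakly_equivalent_implies_isomorphic_general X Y hX hY F hF hsign
end

section
/- There exist two 6-element sets X, Y ⊆ ℝ², each in general position, that are weakly equivalent but not equivalent: some bijection F : X → Y reverses the orientation of every triple of distinct points, but no bijection G : X → Y preserves the orientation of every triple of distinct points. -/
open Set

variable {J : Type} [Fintype J]

/-!
Reflecting a configuration in a line reverses the orientation of every triple, so any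
configuration `X` is weakly equivalent to its mirror image `Y`. If some bijection `G : X → Y`
preserved all orientations, then composing it with the reflection would give a permutation of
`X` reversing all orientations. Hence `X` and `Y` are not equivalent as soon as `X` is chiral,
i.e. admits no orientation-reversing relabelling; for the six integer points below this is
checked over all `6! = 720` permutations.
-/

open Set Function

def orientationDet (x y z : Fin 2 → ℝ) : ℝ :=
  (y 0 - x 0) * (z 1 - x 1) - (y 1 - x 1) * (z 0 - x 0)

lemma osign_eq_sign_orientationDet (x y z : Fin 2 → ℝ) :
    osign x y z = (orientationDet x y z).sign := rfl

lemma orientationDet_eq_zero_of_collinear {x y z : Fin 2 → ℝ}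
    (h : Collinear ℝ ({x, y, z} : Set (Fin 2 → ℝ))) : orientationDet x y z = 0 := by
  obtain ⟨p, v, hv⟩ := (collinear_iff_exists_forall_eq_smul_vadd _).1 h
  obtain ⟨a, rfl⟩ := hv x (by simp)
  obtain ⟨b, rfl⟩ := hv y (by simp)
  obtain ⟨c, rfl⟩ := hv z (by simp)
  simp only [orientationDet, Pi.add_apply, Pi.smul_apply, vadd_eq_add, smul_eq_mul]
  ring

lemma genPos_range_of_orientationDet_ne_zero {ι : Type*} (p : ι → Fin 2 → ℝ)
    (h : ∀ i j k, p i ≠ p j → p j ≠ p k → p i ≠ p k → orientationDet (p i) (p j) (p k) ≠ 0) :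
    GenPos (range p) := by
  rintro _ ⟨i, rfl⟩ _ ⟨j, rfl⟩ _ ⟨k, rfl⟩ hij hjk hik hcol
  exact h i j k hij hjk hik (orientationDet_eq_zero_of_collinear hcol)

def reflect (x : Fin 2 → ℝ) : Fin 2 → ℝ := ![-x 0, x 1]

lemma reflect_involutive : Involutive reflect := by
  intro x
  ext t
  fin_cases t <;> simp [reflect]

lemma orientationDet_reflect (x y z : Fin 2 → ℝ) :
    orientationDet (reflect x) (reflect y) (reflect z) = -orientationDet x y z := by
  simp only [orientationDet, reflect, Matrix.cons_val_zero, Matrix.cons_val_one]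
  ring

lemma osign_reflect (x y z : Fin 2 → ℝ) :
    osign (reflect x) (reflect y) (reflect z) = -osign x y z := by
  rw [osign_eq_sign_orientationDet, osign_eq_sign_orientationDet, orientationDet_reflect,
    Real.sign_neg]

def PreservesOrientationOn (F : (Fin 2 → ℝ) → Fin 2 → ℝ) (X : Set (Fin 2 → ℝ)) : Prop :=
  ∀ x₁ ∈ X, ∀ x₂ ∈ X, ∀ x₃ ∈ X, x₁ ≠ x₂ → x₂ ≠ x₃ → x₁ ≠ x₃ →
    osign (F x₁) (F x₂) (F x₃) = osign x₁ x₂ x₃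

def ReversesOrientationOn (F : (Fin 2 → ℝ) → Fin 2 → ℝ) (X : Set (Fin 2 → ℝ)) : Prop :=
  ∀ x₁ ∈ X, ∀ x₂ ∈ X, ∀ x₃ ∈ X, x₁ ≠ x₂ → x₂ ≠ x₃ → x₁ ≠ x₃ →
    osign (F x₁) (F x₂) (F x₃) = -osign x₁ x₂ x₃

lemma reversesOrientationOn_reflect (X : Set (Fin 2 → ℝ)) : ReversesOrientationOn reflect X :=
  fun x₁ _ x₂ _ x₃ _ _ _ _ => osign_reflect x₁ x₂ x₃

lemma bijOn_reflect_image (X : Set (Fin 2 → ℝ)) : BijOn reflect (reflect '' X) X := by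
  simpa [image_image, reflect_involutive _] using
    reflect_involutive.injective.injOn.bijOn_image (s := reflect '' X)

lemma not_preservesOrientationOn_of_bijOn_reflect_image {X : Set (Fin 2 → ℝ)}
    (hX : ∀ σ, BijOn σ X X → ¬ ReversesOrientationOn σ X)
    {G : (Fin 2 → ℝ) → Fin 2 → ℝ} (hG : BijOn G X (reflect '' X)) :
    ¬ PreservesOrientationOn G X := by
  intro hpres
  refine hX (reflect ∘ G) ((bijOn_reflect_image X).comp hG) ?_
  intro x₁ h₁ x₂ h₂ x₃ h₃ h₁₂ h₂₃ h₁₃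
  rw [comp_apply, comp_apply, comp_apply, osign_reflect, hpres x₁ h₁ x₂ h₂ x₃ h₃ h₁₂ h₂₃ h₁₃]

lemma exists_perm_of_bijOn_range {ι α : Type*} [Finite ι] {p : ι → α} (hp : Injective p)
    {f : α → α} (hf : BijOn f (range p) (range p)) :
    ∃ σ : Equiv.Perm ι, ∀ i, f (p i) = p (σ i) := by
  choose σ hσ using fun i => hf.mapsTo (mem_range_self (f := p) i)
  have hσ_inj : Injective σ := fun i j h =>
    hp (hf.injOn (mem_range_self i) (mem_range_self j) (by rw [← hσ i, ← hσ j, h]))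
  exact ⟨Equiv.ofBijective σ (Finite.injective_iff_bijective.1 hσ_inj), fun i => (hσ i).symm⟩

def intDet (p q r : Fin 2 → ℤ) : ℤ :=
  (q 0 - p 0) * (r 1 - p 1) - (q 1 - p 1) * (r 0 - p 0)

lemma orientationDet_intCast (p q r : Fin 2 → ℤ) :
    orientationDet (Int.cast ∘ p) (Int.cast ∘ q) (Int.cast ∘ r) = intDet p q r := by
  simp only [orientationDet, intDet, comp_apply]
  push_cast
  ring

lemma osign_intCast (p q r : Fin 2 → ℤ) :
    osign (Int.cast ∘ p) (Int.cast ∘ q) (Int.cast ∘ r) = (intDet p q r).sign := by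
  rw [osign_eq_sign_orientationDet, orientationDet_intCast, Real.sign_intCast]

def chiralConfigInt : Fin 6 → Fin 2 → ℤ :=
  ![![4, 4], ![6, 9], ![6, 2], ![9, 1], ![3, 7], ![0, 2]]

lemma chiralConfigInt_injective : Injective chiralConfigInt := by decide

lemma intDet_chiralConfigInt_ne_zero : ∀ i j k : Fin 6, i ≠ j → j ≠ k → i ≠ k →
    intDet (chiralConfigInt i) (chiralConfigInt j) (chiralConfigInt k) ≠ 0 := by decide

set_option maxRecDepth 40000 in
lemma chiralConfigInt_not_reversed_by_perm : ∀ σ : Equiv.Perm (Fin 6), ∃ i j k : Fin 6,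
    i ≠ j ∧ j ≠ k ∧ i ≠ k ∧
    (intDet (chiralConfigInt (σ i)) (chiralConfigInt (σ j)) (chiralConfigInt (σ k))).sign ≠
      -(intDet (chiralConfigInt i) (chiralConfigInt j) (chiralConfigInt k)).sign := by
  decide

noncomputable def chiralConfig (i : Fin 6) : Fin 2 → ℝ := Int.cast ∘ chiralConfigInt i

lemma chiralConfig_injective : Injective chiralConfig :=
  Int.cast_injective.comp_left.comp chiralConfigInt_injective

lemma orientationDet_chiralConfig_ne_zero {i j k : Fin 6}
    (hij : chiralConfig i ≠ chiralConfig j) (hjk : chiralConfig j ≠ chiralConfig k)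
    (hik : chiralConfig i ≠ chiralConfig k) :
    orientationDet (chiralConfig i) (chiralConfig j) (chiralConfig k) ≠ 0 := by
  rw [chiralConfig, chiralConfig, chiralConfig, orientationDet_intCast, Int.cast_ne_zero]
  exact intDet_chiralConfigInt_ne_zero i j k (ne_of_apply_ne _ hij) (ne_of_apply_ne _ hjk)
    (ne_of_apply_ne _ hik)

lemma genPos_range_chiralConfig : GenPos (range chiralConfig) :=
  genPos_range_of_orientationDet_ne_zero _ fun _ _ _ => orientationDet_chiralConfig_ne_zero

lemma genPos_reflect_image_range_chiralConfig : GenPos (reflect '' range chiralConfig) := by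
  rw [← range_comp]
  refine genPos_range_of_orientationDet_ne_zero _ fun i j k hij hjk hik => ?_
  simp only [comp_apply, orientationDet_reflect, neg_ne_zero]
  exact orientationDet_chiralConfig_ne_zero (ne_of_apply_ne _ hij) (ne_of_apply_ne _ hjk)
    (ne_of_apply_ne _ hik)

lemma not_reversesOrientationOn_range_chiralConfig (σ : (Fin 2 → ℝ) → Fin 2 → ℝ)
    (hσ : BijOn σ (range chiralConfig) (range chiralConfig)) :
    ¬ ReversesOrientationOn σ (range chiralConfig) := by
  intro hrev
  obtain ⟨e, he⟩ := exists_perm_of_bijOn_range chiralConfig_injective hσ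
  obtain ⟨i, j, k, hij, hjk, hik, hne⟩ := chiralConfigInt_not_reversed_by_perm e
  have hsign := hrev _ (mem_range_self i) _ (mem_range_self j) _ (mem_range_self k)
    (chiralConfig_injective.ne hij) (chiralConfig_injective.ne hjk)
    (chiralConfig_injective.ne hik)
  rw [he i, he j, he k] at hsign
  simp only [chiralConfig, osign_intCast] at hsign
  exact hne (by exact_mod_cast hsign)

/-- There are two 6-point planar configurations in general position that
are weakly equivalent (some bijection reverses the orientation of every triple) but not
equivalent (no bijection preserves the orientation of every triple). -/
theorem exists_weakly_equivalent_not_equivalent :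
    ∃ X Y : Set (Fin 2 → ℝ), X.ncard = 6 ∧ Y.ncard = 6 ∧ GenPos X ∧ GenPos Y ∧
      (∃ F : (Fin 2 → ℝ) → (Fin 2 → ℝ), Set.BijOn F X Y ∧
        ∀ x₁ ∈ X, ∀ x₂ ∈ X, ∀ x₃ ∈ X, x₁ ≠ x₂ → x₂ ≠ x₃ → x₁ ≠ x₃ →
          osign (F x₁) (F x₂) (F x₃) = - osign x₁ x₂ x₃) ∧
      ¬ (∃ G : (Fin 2 → ℝ) → (Fin 2 → ℝ), Set.BijOn G X Y ∧
        ∀ x₁ ∈ X, ∀ x₂ ∈ X, ∀ x₃ ∈ X, x₁ ≠ x₂ → x₂ ≠ x₃ → x₁ ≠ x₃ →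
          osign (G x₁) (G x₂) (G x₃) = osign x₁ x₂ x₃) := by
  have hcard : (range chiralConfig).ncard = 6 := by
    rw [ncard_range_of_injective chiralConfig_injective, Nat.card_eq_fintype_card,
      Fintype.card_fin]
  refine ⟨range chiralConfig, reflect '' range chiralConfig, hcard, ?_,
    genPos_range_chiralConfig, genPos_reflect_image_range_chiralConfig,
    ⟨reflect, reflect_involutive.injective.injOn.bijOn_image,
      reversesOrientationOn_reflect _⟩, ?_⟩
  · rwa [ncard_image_of_injective _ reflect_involutive.injective]
  · rintro ⟨G, hG, hpres⟩
    exact not_preservesOrientationOn_of_bijOn_reflect_image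
      not_reversesOrientationOn_range_chiralConfig hG hpres
end

section
/- Let X ⊆ ℝ² be a finite set in general position whose extreme points (points p ∈ X with p ∉ convexHull ℝ (X \ {p})) are a₁, …, aₙ (n ≥ 3), listed in clockwise circular order, i.e. sign(a_i, a_j, a_k) = −1 for all i < j < k. Let x ∈ X and let y ∈ X be a non-extreme point with y ≠ x. Then there is exactly one index i ∈ {1, …, n} (indices taken modulo n) such that x, a_i, a_{i+1} are pairwise distinct, y ∉ {x, a_i, a_{i+1}}, and y ∈ convexHull ℝ {x, a_i, a_{i+1}} (the carousel rule). -/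
open Set

variable {J : Type} [Fintype J]

/-- Cyclic successor on `Fin n`. -/
def cyclicSucc {n : ℕ} (i : Fin n) : Fin n := ⟨(i.val + 1) % n, Nat.mod_lt _ i.pos⟩

/-!
Write `s k` for the orientation of `(x, a k, y)`. The point `y` lies strictly to the right of
every edge `a i → a (i + 1)` of the clockwise polygon, so it lies in the triangle
`x, a i, a (i + 1)` exactly when `s i < 0 < s (i + 1)`. Along the clockwise order the
Grassmann–Plücker relation rules out the sign patterns `- + - +` and `+ - + -` in `s`, and `s`
vanishes only at `x = a k`, between a `+` and a `-`; hence `s` changes sign from `-` to `+`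
exactly once around the cycle.
-/

lemma Set.Finite.subset_convexHull_setOf_notMem_convexHull_sdiff {E : Type*}
    [NormedAddCommGroup E] [NormedSpace ℝ E] {X : Set E} (hX : X.Finite) :
    X ⊆ convexHull ℝ {p ∈ X | p ∉ convexHull ℝ (X \ {p})} := by
  have hext : convexHull ℝ ((convexHull ℝ X).extremePoints ℝ) = convexHull ℝ X := by
    rw [← ((hX.subset extremePoints_convexHull_subset).isClosed_convexHull ℝ).closure_eq]
    exact closure_convexHull_extremePoints (hX.isCompact_convexHull ℝ) (convex_convexHull ℝ X)
  refine (subset_convexHull ℝ X).trans (hext ▸ convexHull_mono fun e he =>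
    ⟨extremePoints_convexHull_subset he, fun h => ?_⟩)
  exact (extremePoints_convexHull_subset (inter_extremePoints_subset_extremePoints_of_subset
    (convexHull_mono Set.sdiff_subset) ⟨h, he⟩)).2 rfl

section OrientDet

variable {p q r x y z A B : Fin 2 → ℝ}

lemma osign_eq_neg_one_iff : osign x y z = -1 ↔ orientDet x y z < 0 := by
  change Real.sign (orientDet x y z) = -1 ↔ _
  refine ⟨fun h => ?_, Real.sign_of_neg⟩
  by_contra! h'
  rcases h'.eq_or_lt with h0 | hpos
  · rw [← h0, Real.sign_zero] at h; norm_num at h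
  · rw [Real.sign_of_pos hpos] at h; norm_num at h

lemma orientDet_rotate (x y z : Fin 2 → ℝ) : orientDet x y z = orientDet y z x := by
  unfold orientDet; ring

lemma orientDet_swap (x y z : Fin 2 → ℝ) : orientDet y x z = -orientDet x y z := by
  unfold orientDet; ring

lemma orientDet_swap_right (x y z : Fin 2 → ℝ) : orientDet x z y = -orientDet x y z := by
  unfold orientDet; ring

lemma orientDet_swap_outer (x y z : Fin 2 → ℝ) : orientDet z y x = -orientDet x y z := by
  unfold orientDet; ring

@[simp] lemma orientDet_self_left (x z : Fin 2 → ℝ) : orientDet x x z = 0 := by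
  unfold orientDet; ring

@[simp] lemma orientDet_self_right (x y : Fin 2 → ℝ) : orientDet x y y = 0 := by
  unfold orientDet; ring

@[simp] lemma orientDet_self_outer (x y : Fin 2 → ℝ) : orientDet x y x = 0 := by
  unfold orientDet; ring

/-- The three-term Grassmann–Plücker relation. -/
lemma orientDet_plucker (A B C D x y : Fin 2 → ℝ) :
    orientDet B C D * orientDet x A y + orientDet A B D * orientDet x C y =
      orientDet A C D * orientDet x B y + orientDet A B C * orientDet x D y := by
  unfold orientDet; ring

/-- Cramer's rule in barycentric form. -/
lemma orientDet_smul_eq (p q r y : Fin 2 → ℝ) :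
    orientDet p q r • y =
      orientDet q r y • p + orientDet r p y • q + orientDet p q y • r := by
  funext c
  fin_cases c <;> simp [orientDet] <;> ring

lemma orientDet_add_add (p q r y : Fin 2 → ℝ) :
    orientDet q r y + orientDet r p y + orientDet p q y = orientDet p q r := by
  unfold orientDet; ring

noncomputable def orientDetAffineMap (x y : Fin 2 → ℝ) : (Fin 2 → ℝ) →ᵃ[ℝ] ℝ where
  toFun := orientDet x y
  linear := (y 0 - x 0) • LinearMap.proj 1 - (y 1 - x 1) • LinearMap.proj 0
  map_vadd' p v := by simp [orientDet]; ring

lemma orientDet_nonpos_of_mem_convexHull {S : Set (Fin 2 → ℝ)}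
    (hS : ∀ p ∈ S, orientDet x y p ≤ 0) (hz : z ∈ convexHull ℝ S) : orientDet x y z ≤ 0 :=
  convexHull_min hS ((convex_Iic 0).affine_preimage (orientDetAffineMap x y)) hz

lemma orientDet_neg_of_mem_convexHull {S : Set (Fin 2 → ℝ)}
    (hS : ∀ p ∈ S, orientDet x y p < 0) (hz : z ∈ convexHull ℝ S) : orientDet x y z < 0 :=
  convexHull_min hS ((convex_Iio 0).affine_preimage (orientDetAffineMap x y)) hz

lemma exists_orientDet_nonneg_of_mem_convexHull {S : Set (Fin 2 → ℝ)}
    (hy : y ∈ convexHull ℝ S) : ∃ p ∈ S, 0 ≤ orientDet x y p := by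
  by_contra! h
  simpa using orientDet_neg_of_mem_convexHull h hy

lemma collinear_of_orientDet_eq_zero_s16 (h : orientDet p q r = 0) :
    Collinear ℝ ({p, q, r} : Set (Fin 2 → ℝ)) := by
  obtain rfl | hpq := eq_or_ne q p
  · simpa using collinear_pair ℝ q r
  obtain ⟨c, hc⟩ : ∃ c, q c - p c ≠ 0 := by
    by_contra! h'
    exact hpq (funext fun c => sub_eq_zero.1 (h' c))
  rw [collinear_iff_of_mem (Set.mem_insert p _)]
  refine ⟨q - p, ?_⟩
  simp only [Set.mem_insert_iff, Set.mem_singleton_iff, forall_eq_or_imp, forall_eq]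
  refine ⟨⟨0, by simp⟩, ⟨1, by simp⟩, ⟨(r c - p c) / (q c - p c), funext fun d => ?_⟩⟩
  simp only [vadd_eq_add, Pi.add_apply, Pi.smul_apply, Pi.sub_apply, smul_eq_mul]
  unfold orientDet at h
  fin_cases c <;> fin_cases d <;> simp at hc ⊢ <;> field_simp <;> linarith

lemma orientDet_ne_zero_of_genPos {X : Set (Fin 2 → ℝ)} (hX : GenPos X) (hx : x ∈ X)
    (hy : y ∈ X) (hz : z ∈ X) (hxy : x ≠ y) (hyz : y ≠ z) (hxz : x ≠ z) :
    orientDet x y z ≠ 0 :=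
  fun h => hX x hx y hy z hz hxy hyz hxz (collinear_of_orientDet_eq_zero_s16 h)

lemma orientDet_not_alternating {A B C D : Fin 2 → ℝ} (hABC : orientDet A B C < 0)
    (hABD : orientDet A B D < 0) (hACD : orientDet A C D < 0) (hBCD : orientDet B C D < 0)
    (x y : Fin 2 → ℝ) :
    ¬(orientDet x A y < 0 ∧ 0 < orientDet x B y ∧ orientDet x C y < 0 ∧ 0 < orientDet x D y) := by
  rintro ⟨hA, hB, hC, hD⟩
  nlinarith [orientDet_plucker A B C D x y, mul_pos_of_neg_of_neg hBCD hA,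
    mul_pos_of_neg_of_neg hABD hC, mul_neg_of_neg_of_pos hACD hB, mul_neg_of_neg_of_pos hABC hD]

lemma mem_convexHull_triple_iff_s16 (hD : orientDet p q r < 0) :
    y ∈ convexHull ℝ ({p, q, r} : Set (Fin 2 → ℝ)) ↔
      orientDet p q y ≤ 0 ∧ orientDet q r y ≤ 0 ∧ orientDet r p y ≤ 0 := by
  have hqrp : orientDet q r p < 0 := by rwa [← orientDet_rotate]
  have hrpq : orientDet r p q < 0 := by rwa [← orientDet_rotate, ← orientDet_rotate]
  constructor
  · intro hy
    refine ⟨orientDet_nonpos_of_mem_convexHull ?_ hy, orientDet_nonpos_of_mem_convexHull ?_ hy,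
      orientDet_nonpos_of_mem_convexHull ?_ hy⟩ <;>
    simp [hD.le, hqrp.le, hrpq.le]
  · rintro ⟨hr, hp, hq⟩
    set D := orientDet p q r
    have hy : y = ∑ i, ![orientDet q r y / D, orientDet r p y / D, orientDet p q y / D] i •
        ![p, q, r] i := by
      calc y = D⁻¹ • (D • y) := (inv_smul_smul₀ hD.ne y).symm
        _ = _ := by
          rw [orientDet_smul_eq]
          simp [Fin.sum_univ_three, smul_add, smul_smul, div_eq_inv_mul]
    rw [hy]
    refine (convex_convexHull ℝ _).sum_mem (fun i _ => ?_) ?_ (fun i _ => ?_)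
    · fin_cases i <;> exact div_nonneg_of_nonpos (by assumption) hD.le
    · simp only [Fin.sum_univ_three, Matrix.cons_val, ← add_div, orientDet_add_add]
      exact div_self hD.ne
    · fin_cases i <;> exact subset_convexHull ℝ _ (by simp)

lemma mem_convexHull_triple_iff_of_ne_zero (hx : orientDet A B x < 0) (hy : orientDet A B y < 0)
    (hA : orientDet x A y ≠ 0) (hB : orientDet x B y ≠ 0) :
    y ∈ convexHull ℝ ({x, A, B} : Set (Fin 2 → ℝ)) ↔
      orientDet x A y < 0 ∧ 0 < orientDet x B y := by
  rw [mem_convexHull_triple_iff_s16 (by rwa [orientDet_rotate]), orientDet_swap x B y,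
    neg_nonpos, hA.le_iff_lt, hB.symm.le_iff_lt]
  exact ⟨fun h => ⟨h.1, h.2.2⟩, fun h => ⟨h.1, hy.le, h.2⟩⟩

end OrientDet

section Cyclic

variable {n : ℕ}

lemma cyclicSucc_val_of_lt {i : Fin n} (h : i.val + 1 < n) : (cyclicSucc i).val = i.val + 1 :=
  Nat.mod_eq_of_lt h

lemma cyclicSucc_val_of_eq {i : Fin n} (h : i.val + 1 = n) : (cyclicSucc i).val = 0 := by
  simp [cyclicSucc, h]

lemma cyclicSucc_eq_add_one [NeZero n] (i : Fin n) : cyclicSucc i = i + 1 := by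
  ext; simp [cyclicSucc, Fin.val_add, Nat.add_mod_mod]

lemma cyclicSucc_ne_self (hn : 2 ≤ n) (i : Fin n) : cyclicSucc i ≠ i := by
  intro h
  have hv := congrArg Fin.val h
  rcases Nat.lt_or_ge (i.val + 1) n with hi | hi
  · rw [cyclicSucc_val_of_lt hi] at hv; omega
  · rw [cyclicSucc_val_of_eq (by omega)] at hv; omega

open Fin.NatCast in
lemma exists_not_and_cyclicSucc {P : Fin n → Prop} (h₁ : ∃ i, ¬P i) (h₂ : ∃ i, P i) :
    ∃ i, ¬P i ∧ P (cyclicSucc i) := by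
  obtain ⟨i₀, hi₀⟩ := h₁
  have : NeZero n := ⟨i₀.pos.ne'⟩
  by_contra! h
  have hk : ∀ k : ℕ, ¬P (i₀ + (k : Fin n)) := by
    intro k
    induction k with
    | zero => simpa
    | succ k ih => simpa [Nat.cast_succ, ← add_assoc, cyclicSucc_eq_add_one] using h _ ih
  obtain ⟨j, hj⟩ := h₂
  exact hk (j - i₀).val (by simpa using hj)

section SignChanges

variable {s : Fin n → ℝ}

/-- Two `-+` transitions at `i < j` would make `i, i + 1, j, j + 1` (or, when `j + 1` wraps
around, `j + 1, i, i + 1, j`) an alternating subsequence. -/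
lemma not_lt_of_neg_pos_cyclicSucc
    (halt : ∀ p q r t, p < q → q < r → r < t → ¬(s p < 0 ∧ 0 < s q ∧ s r < 0 ∧ 0 < s t))
    (halt' : ∀ p q r t, p < q → q < r → r < t → ¬(0 < s p ∧ s q < 0 ∧ 0 < s r ∧ s t < 0))
    {i j : Fin n} (hi : s i < 0 ∧ 0 < s (cyclicSucc i))
    (hj : s j < 0 ∧ 0 < s (cyclicSucc j)) : ¬i < j := by
  intro hij
  have hij' := Fin.lt_def.1 hij
  have hsi := cyclicSucc_val_of_lt (i := i) (by omega)
  have hsij : cyclicSucc i < j := by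
    have : (cyclicSucc i).val ≠ j.val := fun h => by
      rw [Fin.ext h] at hi; linarith [hi.2, hj.1]
    rw [Fin.lt_def]; omega
  rcases Nat.lt_or_ge (j.val + 1) n with hj1 | hj1
  · exact halt i _ j _ (by rw [Fin.lt_def]; omega) hsij
      (by rw [Fin.lt_def, cyclicSucc_val_of_lt hj1]; omega) ⟨hi.1, hi.2, hj.1, hj.2⟩
  · have hsj := cyclicSucc_val_of_eq (i := j) (by omega)
    have hsji : cyclicSucc j < i := by
      have : i.val ≠ 0 := fun h => by
        rw [← hsj, ← Fin.ext_iff] at h; rw [h] at hi; linarith [hi.1, hj.2]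
      rw [Fin.lt_def]; omega
    exact halt' _ i _ j hsji (by rw [Fin.lt_def]; omega) hsij ⟨hj.2, hi.1, hi.2, hj.1⟩

lemma existsUnique_neg_pos_cyclicSucc
    (halt : ∀ p q r t, p < q → q < r → r < t → ¬(s p < 0 ∧ 0 < s q ∧ s r < 0 ∧ 0 < s t))
    (halt' : ∀ p q r t, p < q → q < r → r < t → ¬(0 < s p ∧ s q < 0 ∧ 0 < s r ∧ s t < 0))
    (hnonpos : ∃ i, s i ≤ 0) (hnonneg : ∃ i, 0 ≤ s i)
    (hzero : ∀ i, s i = 0 → s (cyclicSucc i) < 0)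
    (hzero' : ∀ i, s (cyclicSucc i) = 0 → 0 < s i) :
    ∃! i, s i < 0 ∧ 0 < s (cyclicSucc i) := by
  have hneg : ∃ i, ¬0 ≤ s i := by
    obtain ⟨i, hi⟩ := hnonpos
    rcases hi.lt_or_eq with hi | hi
    exacts [⟨i, hi.not_ge⟩, ⟨_, (hzero i hi).not_ge⟩]
  obtain ⟨i, hi, hsi⟩ := exists_not_and_cyclicSucc hneg hnonneg
  rw [not_le] at hi
  have hsi' : 0 < s (cyclicSucc i) := hsi.lt_of_ne fun h => (hzero' i h.symm).not_gt hi
  exact ⟨i, ⟨hi, hsi'⟩, fun j hj => le_antisymm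
    (not_lt.1 (not_lt_of_neg_pos_cyclicSucc halt halt' ⟨hi, hsi'⟩ hj))
    (not_lt.1 (not_lt_of_neg_pos_cyclicSucc halt halt' hj ⟨hi, hsi'⟩))⟩

end SignChanges

end Cyclic

lemma carousel_condition_iff {X : Set (Fin 2 → ℝ)} {x y A B : Fin 2 → ℝ} (hgp : GenPos X)
    (hx : x ∈ X) (hy : y ∈ X) (hA : A ∈ X) (hB : B ∈ X) (hyx : y ≠ x) (hyA : y ≠ A)
    (hyB : y ≠ B) (hAB : A ≠ B) (hedge : ∀ z ∈ X, z ≠ A → z ≠ B → orientDet A B z < 0) :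
    (x ≠ A ∧ x ≠ B ∧ A ≠ B ∧ y ≠ x ∧ y ≠ A ∧ y ≠ B ∧
        y ∈ convexHull ℝ ({x, A, B} : Set (Fin 2 → ℝ))) ↔
      orientDet x A y < 0 ∧ 0 < orientDet x B y := by
  have hmem (hxA : x ≠ A) (hxB : x ≠ B) :
      y ∈ convexHull ℝ ({x, A, B} : Set (Fin 2 → ℝ)) ↔
        orientDet x A y < 0 ∧ 0 < orientDet x B y :=
    mem_convexHull_triple_iff_of_ne_zero (hedge x hx hxA hxB) (hedge y hy hyA hyB)
      (orientDet_ne_zero_of_genPos hgp hx hA hy hxA hyA.symm hyx.symm)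
      (orientDet_ne_zero_of_genPos hgp hx hB hy hxB hyB.symm hyx.symm)
  constructor
  · rintro ⟨hxA, hxB, -, -, -, -, hy⟩
    exact (hmem hxA hxB).1 hy
  · intro h
    have hxA : x ≠ A := by rintro rfl; simp at h
    have hxB : x ≠ B := by rintro rfl; simp at h
    exact ⟨hxA, hxB, hAB, hyx, hyA, hyB, (hmem hxA hxB).2 h⟩

section ConvexPolygon

variable {n : ℕ} {a : Fin n → Fin 2 → ℝ} {X : Set (Fin 2 → ℝ)}

lemma orientDet_cyclicSucc_nonpos
    (hcw : ∀ i j k : Fin n, i < j → j < k → orientDet (a i) (a j) (a k) < 0) (i k : Fin n) :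
    orientDet (a i) (a (cyclicSucc i)) (a k) ≤ 0 := by
  obtain rfl | hki := eq_or_ne k i
  · simp
  obtain rfl | hks := eq_or_ne k (cyclicSucc i)
  · simp
  have hki' := Fin.val_ne_of_ne hki
  have hks' := Fin.val_ne_of_ne hks
  have hk := k.isLt
  simp only [Fin.lt_def] at hcw
  rcases Nat.lt_or_ge (i.val + 1) n with hi | hi
  · rw [cyclicSucc_val_of_lt hi] at hks'
    rcases Nat.lt_or_gt_of_ne hki' with hlt | hgt
    · rw [← orientDet_rotate]
      exact (hcw k i _ hlt (by rw [cyclicSucc_val_of_lt hi]; omega)).le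
    · exact (hcw i _ k (by rw [cyclicSucc_val_of_lt hi]; omega)
        (by rw [cyclicSucc_val_of_lt hi]; omega)).le
  · have hsi := cyclicSucc_val_of_eq (i := i) (by omega)
    rw [orientDet_rotate]
    exact (hcw _ k i (by omega) (by omega)).le

lemma orientDet_cyclicSucc_neg
    (hcw : ∀ i j k : Fin n, i < j → j < k → orientDet (a i) (a j) (a k) < 0)
    (hgp : GenPos X) (haX : ∀ i, a i ∈ X) (hXa : X ⊆ convexHull ℝ (range a))
    (hsucc : ∀ i, a i ≠ a (cyclicSucc i)) (i : Fin n) {z : Fin 2 → ℝ} (hz : z ∈ X)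
    (hzi : z ≠ a i) (hzs : z ≠ a (cyclicSucc i)) :
    orientDet (a i) (a (cyclicSucc i)) z < 0 :=
  (orientDet_nonpos_of_mem_convexHull (forall_mem_range.2 (orientDet_cyclicSucc_nonpos hcw i))
    (hXa hz)).lt_of_ne
    (orientDet_ne_zero_of_genPos hgp (haX i) (haX _) hz (hsucc i) hzs.symm hzi.symm)

lemma existsUnique_orientDet_neg_pos
    (hcw : ∀ i j k : Fin n, i < j → j < k → orientDet (a i) (a j) (a k) < 0)
    (hgp : GenPos X) (haX : ∀ i, a i ∈ X) (hXa : X ⊆ convexHull ℝ (range a))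
    (hsucc : ∀ i, a i ≠ a (cyclicSucc i)) {x y : Fin 2 → ℝ} (hx : x ∈ X) (hy : y ∈ X)
    (hya : ∀ i, y ≠ a i) (hyx : y ≠ x) :
    ∃! i, orientDet x (a i) y < 0 ∧ 0 < orientDet x (a (cyclicSucc i)) y := by
  have hx_eq : ∀ k, orientDet x (a k) y = 0 → x = a k := fun k h => by_contra fun hxk =>
    orientDet_ne_zero_of_genPos hgp hx (haX k) hy hxk (hya k).symm hyx.symm h
  have hedge k := orientDet_cyclicSucc_neg hcw hgp haX hXa hsucc k hy (hya k) (hya _)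
  have hnot_alt {p q r t : Fin n} (hpq : p < q) (hqr : q < r) (hrt : r < t) :=
    orientDet_not_alternating (hcw p q r hpq hqr) (hcw p q t hpq (hqr.trans hrt))
      (hcw p r t (hpq.trans hqr) hrt) (hcw q r t hqr hrt)
  apply existsUnique_neg_pos_cyclicSucc
  · exact fun p q r t hpq hqr hrt => hnot_alt hpq hqr hrt x y
  · intro p q r t hpq hqr hrt
    simpa [orientDet_swap_outer y] using hnot_alt hpq hqr hrt y x
  · obtain ⟨_, ⟨k, rfl⟩, hk⟩ := exists_orientDet_nonneg_of_mem_convexHull (x := x) (hXa hy)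
    exact ⟨k, by rw [orientDet_swap_right]; linarith⟩
  · obtain ⟨_, ⟨k, rfl⟩, hk⟩ := exists_orientDet_nonneg_of_mem_convexHull (x := y) (hXa hx)
    exact ⟨k, by rwa [orientDet_rotate] at hk⟩
  · intro k hk
    rw [hx_eq k hk]
    exact hedge k
  · intro k hk
    rw [hx_eq _ hk, orientDet_swap]
    linarith [hedge k]

end ConvexPolygon

/-- carousel rule: Let `X ⊆ ℝ²` be finite, in general position, with
extreme points `a 0, …, a (n-1)` (`n ≥ 3`) listed in clockwise circular order. For any
`x ∈ X` and any non-extreme `y ∈ X` with `y ≠ x`, there is exactly one index `i`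
(modulo `n`) with `x, a i, a (i+1)` pairwise distinct, `y ∉ {x, a i, a (i+1)}`, and
`y ∈ convexHull ℝ {x, a i, a (i+1)}`. -/
theorem carousel_rule (n : ℕ) (hn : 3 ≤ n) (X : Set (Fin 2 → ℝ)) (hXfin : X.Finite)
    (hgp : GenPos X) (a : Fin n → (Fin 2 → ℝ)) (hinj : Function.Injective a)
    (hext : Set.range a = {p ∈ X | p ∉ convexHull ℝ (X \ {p})})
    (hcw : ∀ i j k : Fin n, i < j → j < k → osign (a i) (a j) (a k) = -1)
    (x : Fin 2 → ℝ) (hx : x ∈ X) (y : Fin 2 → ℝ) (hy : y ∈ X)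
    (hyne : y ∉ Set.range a) (hyx : y ≠ x) :
    ∃! i : Fin n,
      x ≠ a i ∧ x ≠ a (cyclicSucc i) ∧ a i ≠ a (cyclicSucc i) ∧
      y ≠ x ∧ y ≠ a i ∧ y ≠ a (cyclicSucc i) ∧
      y ∈ convexHull ℝ ({x, a i, a (cyclicSucc i)} : Set (Fin 2 → ℝ)) := by
  have hcw' i j k hij hjk := osign_eq_neg_one_iff.1 (hcw i j k hij hjk)
  have haX i : a i ∈ X := (hext.subset (mem_range_self i)).1
  have hXa : X ⊆ convexHull ℝ (range a) :=
    hext ▸ hXfin.subset_convexHull_setOf_notMem_convexHull_sdiff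
  have hya i : y ≠ a i := fun h => hyne ⟨i, h.symm⟩
  have hsucc i : a i ≠ a (cyclicSucc i) := hinj.ne (cyclicSucc_ne_self (by omega) i).symm
  rw [existsUnique_congr fun i => carousel_condition_iff hgp hx hy (haX i) (haX _) hyx (hya i)
    (hya _) (hsucc i) fun z hz => orientDet_cyclicSucc_neg hcw' hgp haX hXa hsucc i hz]
  exact existsUnique_orientDet_neg_pos hcw' hgp haX hXa hsucc hx hy hya hyx
end

section
/- Let (J, cl) be a finite convex 4-geometry satisfying the 3-carousel rule, and let a, u, v, b, x be five distinct elements of J with b ∈ cl {a, u, v}, x ∈ cl {a, u, v}, and x ∈ cl {b, u, v}. Then exactly one of the two statements holds: b ∈ cl {x, a, u}, or b ∈ cl {x, a, v}. -/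
open Set

variable {J : Type} [Fintype J]

/-- A convex geometry satisfies the 3-carousel rule if for any five distinct points
`a, b, c, x, y` with `x, y ∈ cl {a,b,c}`, exactly one of `x ∈ cl {a,b,y}`,
`x ∈ cl {a,c,y}`, `x ∈ cl {b,c,y}` holds. -/
def ConvexGeometry.ThreeCarousel (G : ConvexGeometry J) : Prop :=
  ∀ a b c x y : J, a ≠ b → a ≠ c → a ≠ x → a ≠ y → b ≠ c → b ≠ x → b ≠ y →
    c ≠ x → c ≠ y → x ≠ y →
    x ∈ G.cl ({a, b, c} : Set J) → y ∈ G.cl ({a, b, c} : Set J) →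
    ((x ∈ G.cl ({a, b, y} : Set J) ∧ x ∉ G.cl ({a, c, y} : Set J) ∧
        x ∉ G.cl ({b, c, y} : Set J)) ∨
     (x ∉ G.cl ({a, b, y} : Set J) ∧ x ∈ G.cl ({a, c, y} : Set J) ∧
        x ∉ G.cl ({b, c, y} : Set J)) ∨
     (x ∉ G.cl ({a, b, y} : Set J) ∧ x ∉ G.cl ({a, c, y} : Set J) ∧
        x ∈ G.cl ({b, c, y} : Set J)))

namespace ConvexGeometry

variable (G : ConvexGeometry J)

theorem exists_isCircuit_subset {D : Set J} (hD : G.Dependent D) : ∃ C ⊆ D, G.IsCircuit C := by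
  obtain ⟨C, hCD, hdep, hmin⟩ := exists_minimal_le_of_wellFoundedLT G.Dependent D hD
  exact ⟨C, hCD, hdep, fun E hEC hE ↦ hEC.antisymm (hmin hE hEC)⟩

theorem cl_insert_cl (S : Set J) (t : J) : G.cl (insert t (G.cl S)) = G.cl (insert t S) := by
  refine (G.mono _ _ (insert_subset_insert (G.extensive S))).antisymm' ?_
  calc G.cl (insert t (G.cl S)) ⊆ G.cl (G.cl (insert t S)) :=
        G.mono _ _ (insert_subset ((G.extensive _) (mem_insert t S))
          (G.mono _ _ (subset_insert t S)))
    _ = G.cl (insert t S) := G.idem _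

theorem notMem_cl_insert_of_mem_cl_insert {A : Set J} {x y : J} (hxy : x ≠ y)
    (hx : x ∉ G.cl A) (hy : y ∉ G.cl A) (hxA : x ∈ G.cl (insert y A)) :
    y ∉ G.cl (insert x A) := by
  have key := G.antiExchange (G.cl A) (G.idem A) x y hxy hx hy
  simp only [union_singleton, cl_insert_cl] at key
  exact key hxA

theorem notMem_cl_pair (h4 : G.Is4Geometry) {u v x : J} (hux : u ≠ x) (hvx : v ≠ x) :
    x ∉ G.cl {u, v} := by
  intro hx
  have hdep : G.Dependent {u, v, x} :=
    ⟨x, by simp, G.mono _ _ (by simp [insert_subset_iff, hux, hvx]) hx⟩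
  obtain ⟨C, hCsub, hC⟩ := G.exists_isCircuit_subset hdep
  have : C.ncard ≤ 3 := (ncard_le_ncard hCsub).trans <|
    (ncard_insert_le _ _).trans <| by grw [ncard_insert_le, ncard_singleton]
  have := h4 C hC
  omega

end ConvexGeometry

/-- In a convex 4-geometry satisfying the 3-carousel rule, if
`b, x ∈ cl {a, u, v}` and `x ∈ cl {b, u, v}`, then exactly one of `b ∈ cl {x, a, u}` and
`b ∈ cl {x, a, v}` holds. -/
theorem three_carousel_consequence (G : ConvexGeometry J) (h4 : G.Is4Geometry)
    (h3c : G.ThreeCarousel) (a u v b x : J)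
    (hau : a ≠ u) (hav : a ≠ v) (hab : a ≠ b) (hax : a ≠ x)
    (huv : u ≠ v) (hub : u ≠ b) (hux : u ≠ x)
    (hvb : v ≠ b) (hvx : v ≠ x) (hbx : b ≠ x)
    (hb : b ∈ G.cl ({a, u, v} : Set J)) (hx1 : x ∈ G.cl ({a, u, v} : Set J))
    (hx2 : x ∈ G.cl ({b, u, v} : Set J)) :
    (b ∈ G.cl ({x, a, u} : Set J) ∧ b ∉ G.cl ({x, a, v} : Set J)) ∨
    (b ∉ G.cl ({x, a, u} : Set J) ∧ b ∈ G.cl ({x, a, v} : Set J)) := by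
  -- anti-exchange over `cl {u, v}` rules out the carousel's third alternative `b ∈ cl {u, v, x}`
  have hb_uvx : b ∉ G.cl {x, u, v} :=
    G.notMem_cl_insert_of_mem_cl_insert hbx.symm (G.notMem_cl_pair h4 hux hvx)
      (G.notMem_cl_pair h4 hub hvb) hx2
  have hcycle : ∀ p q r : J, ({p, q, r} : Set J) = {r, p, q} := fun p q r ↦ by
    rw [pair_comm q r, insert_comm]
  rw [← hcycle u v x] at hb_uvx
  rw [← hcycle a u x, ← hcycle a v x]
  rcases h3c a u v b x hau hav hab hax huv hub hux hvb hvx hbx hb hx1 with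
    ⟨hb_aux, hb_avx, -⟩ | ⟨hb_aux, hb_avx, -⟩ | ⟨-, -, hb_uvx'⟩
  · exact Or.inl ⟨hb_aux, hb_avx⟩
  · exact Or.inr ⟨hb_aux, hb_avx⟩
  · exact absurd hb_uvx' hb_uvx
end
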